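/- arXiv:2105.04063 — 6 statements merged into one kernel-verified Lean document; each statement's English description precedes it below -/
import Mathlib

section
/- Let Γ be a countable discrete group, let a be a Borel action of Γ on a standard Borel space X, let G be a Borel graph on X, and fix a generic sequence ⟨(γ_n, s_n) : n ∈ ℕ⟩. Then either (G, a) admits a Borel a-coloring, or there is a Borel equivariant homomorphism f : Γ × 2^ω → X from (G_Γ, a_Γ) to (G, a), i.e. f(h ·_{a_Γ} x) = h ·_a f(x) for all h ∈ Γ and all x ∈ Γ × 2^ω, and (f(x), f(y)) ∈ G whenever x and y are G_Γ-adjacent. -/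
namespace Paper

variable {X Y : Type*}

/-- A (simple, undirected) graph on `X`: a symmetric irreflexive set of ordered pairs. -/
def IsGraph (G : Set (X × X)) : Prop :=
  (∀ x y, (x, y) ∈ G → (y, x) ∈ G) ∧ ∀ x, (x, x) ∉ G

/-- Connectedness (same component) relation of a graph. -/
def Conn (G : Set (X × X)) : X → X → Prop :=
  Relation.ReflTransGen fun x y => (x, y) ∈ G

/-- The reversal of a directed edge. -/
def neg (e : X × X) : X × X := (e.2, e.1)

end Paper
namespace Paper

/-- Concatenation of a finite binary string with an element of `2^ω`. -/
def cat (s : List Bool) (z : ℕ → Bool) : ℕ → Bool := fun n =>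
  if h : n < s.length then s.get ⟨n, h⟩ else z (n - s.length)

/-- A generic sequence `⟨(γ_n, s_n) : n ∈ ℕ⟩`: `s_n ∈ 2^n`, every group element
appears as `γ_n` for infinitely many `n`, and every finite binary string is
extended by some `s_n`. -/
def GenericSeq {Γ : Type*} (γseq : ℕ → Γ) (sseq : ℕ → List Bool) : Prop :=
  (∀ n, (sseq n).length = n) ∧
  (∀ γ : Γ, ∀ m : ℕ, ∃ n, m ≤ n ∧ γseq n = γ) ∧
  ∀ t : List Bool, ∃ n, t <+: sseq n

/-- The graph `G_Γ` on `Γ × 2^ω` determined by a generic sequence: it joins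
`(γ, s_n⌢0⌢z)` and `(γ, s_n⌢1⌢z)` whenever `γ_n = γ`. -/
def GGamma {Γ : Type*} (γseq : ℕ → Γ) (sseq : ℕ → List Bool) :
    Set ((Γ × (ℕ → Bool)) × (Γ × (ℕ → Bool))) :=
  {p | p.1.1 = p.2.1 ∧ ∃ n z, γseq n = p.1.1 ∧
    ((p.1.2 = cat (sseq n ++ [false]) z ∧ p.2.2 = cat (sseq n ++ [true]) z) ∨
     (p.1.2 = cat (sseq n ++ [true]) z ∧ p.2.2 = cat (sseq n ++ [false]) z))}

/-- The action `a_Γ` of `Γ` on `Γ × 2^ω`: `γ · (γ', z) = (γγ', z)`. -/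
def aGamma {Γ : Type*} [Group Γ] (h : Γ) (p : Γ × (ℕ → Bool)) : Γ × (ℕ → Bool) :=
  (h * p.1, p.2)

/-- `f` is a Borel a-coloring of `(G, a)`: a Borel map `f : Y → ℕ × Γ` so that for
every `n` the set `{h ·_a y : f y = (n, h)}` is `G`-independent. -/
def IsBorelAColoring {Γ Y : Type*} [MeasurableSpace Γ] [MeasurableSpace Y]
    (G : Set (Y × Y)) (a : Γ → Y → Y) (f : Y → ℕ × Γ) : Prop :=
  Measurable f ∧ ∀ (n : ℕ) (y y' : Y) (h h' : Γ),
    f y = (n, h) → f y' = (n, h') → (a h y, a h' y') ∉ G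

end Paper


/-!
Fix a continuous surjection `π : ℕ^ℕ → X` and closed sets `R n ⊆ (ℕ^ℕ)³` whose projections
`(b₀, b₁)` are the pairs with `(π b₀, π b₁) ∈ H n`, where `H n` is the pullback of `G` under
`γ_n`. A level-`n` configuration places the `n`-th finite approximation of `G_ℕ` inside a set `Y`
by codes for its vertices and witnesses in `R` for its edges; its approximation, the first `n`
digits of all these codes, ranges over a countable set. An approximation is terminal when the
positions of `s_n` in its realizations form an `H n`-independent set; this set is analytic, so
Lusin separation encloses it in a Borel independent set. Removing these sets transfinitely
stabilizes at a countable stage `Y`, since each approximation removes points at most once. If `Y`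
is empty, the countably many removed Borel sets form the coloring. Otherwise no approximation is
terminal in `Y`, so every configuration refines to the next level; the limit codes of a refining
sequence give a continuous homomorphism `g` from `G_ℕ`, and `(γ, z) ↦ γ · g z` is equivariant.
-/

open Paper Set Filter Topology MeasureTheory Ordinal

theorem MeasureTheory.AnalyticSet.exists_isClosed_projection {β : Type*} [TopologicalSpace β]
    [T2Space β] {B : Set β} (hB : AnalyticSet B) :
    ∃ R : Set ((ℕ → ℕ) × β), IsClosed R ∧ ∀ b, b ∈ B ↔ ∃ w, (w, b) ∈ R := by
  rw [AnalyticSet] at hB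
  rcases hB with rfl | ⟨f, hf, rfl⟩
  · exact ⟨∅, isClosed_empty, by simp⟩
  · exact ⟨{p | f p.1 = p.2}, isClosed_eq (hf.comp continuous_fst) continuous_snd, by simp⟩

section Polish

variable {α : Type*} [TopologicalSpace α] [PolishSpace α] [MeasurableSpace α] [BorelSpace α]
  {H : Set (α × α)}

theorem MeasureTheory.AnalyticSet.setOf_exists_adj {S : Set α} (hS : AnalyticSet S)
    (hH : MeasurableSet H) : AnalyticSet {x | ∃ y ∈ S, (x, y) ∈ H} := by
  rw [AnalyticSet] at hS
  rcases hS with rfl | ⟨f, hf, rfl⟩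
  · simpa using analyticSet_empty
  · have : {x | ∃ y ∈ range f, (x, y) ∈ H} = Prod.fst '' (Prod.map id f ⁻¹' H) := by
      ext; simp
    rw [this]
    exact ((measurable_id.prodMap hf.measurable) hH).analyticSet.image_of_continuous
      continuous_fst

/-- Lusin separation, applied twice: first away from the neighbours of `A`, then away from the
neighbours of the separating set. -/
theorem MeasureTheory.AnalyticSet.exists_measurableSet_superset_disjoint_prod {A : Set α}
    (hA : AnalyticSet A) (hH : MeasurableSet H) (hHsymm : ∀ x y, (x, y) ∈ H → (y, x) ∈ H)
    (hAH : Disjoint (A ×ˢ A) H) :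
    ∃ D, MeasurableSet D ∧ A ⊆ D ∧ Disjoint (D ×ˢ D) H := by
  have disjoint_adj {S T : Set α} (h : Disjoint (S ×ˢ T) H) :
      Disjoint S {x | ∃ y ∈ T, (x, y) ∈ H} :=
    disjoint_left.2 fun x hx ⟨y, hy, hxy⟩ => disjoint_left.1 h (mk_mem_prod hx hy) hxy
  obtain ⟨B₁, hAB₁, hB₁, hB₁m⟩ :=
    hA.measurablySeparable (hA.setOf_exists_adj hH) (disjoint_adj hAH)
  have hAB₁H : Disjoint (A ×ˢ B₁) H :=
    disjoint_left.2 fun ⟨x, y⟩ ⟨hx, hy⟩ hxy => disjoint_left.1 hB₁ ⟨x, hx, hHsymm _ _ hxy⟩ hy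
  obtain ⟨B₂, hAB₂, hB₂, hB₂m⟩ :=
    hA.measurablySeparable (hB₁m.analyticSet.setOf_exists_adj hH) (disjoint_adj hAB₁H)
  refine ⟨B₁ ∩ B₂, hB₁m.inter hB₂m, subset_inter hAB₁ hAB₂, ?_⟩
  exact disjoint_left.2 fun ⟨x, y⟩ ⟨hx, hy⟩ hxy => disjoint_left.1 hB₂ ⟨y, hy.1, hxy⟩ hx.2

end Polish

theorem Ordinal.countable_Iio_iff_lt_omega_one {o : Ordinal} :
    (Iio o).Countable ↔ o < ω₁ := by
  rw [← Cardinal.le_aleph0_iff_set_countable, Cardinal.mk_Iio_ordinal, Cardinal.lift_le_aleph0,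
    Cardinal.lt_omega_iff_card_lt, ← Cardinal.lt_aleph_one_iff]

section Derivative

variable {X ι : Type*} (K : ι → Set X → Set X)

def derivStage (o : Ordinal.{0}) : Set X :=
  (⋃ β : Iio o, ⋃ i, K i (derivStage β))ᶜ
termination_by o
decreasing_by exact β.2

theorem derivStage_eq (o : Ordinal.{0}) :
    derivStage K o = (⋃ β : Iio o, ⋃ i, K i (derivStage K β))ᶜ := by
  rw [derivStage]

theorem derivStage_antitone : Antitone (derivStage K) := by
  intro o o' h
  rw [derivStage_eq, derivStage_eq]
  exact compl_subset_compl.2 <| iUnion_subset fun β =>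
    subset_iUnion_of_subset ⟨β, β.2.trans_le h⟩ subset_rfl

theorem disjoint_derivStage {β o : Ordinal.{0}} (h : β < o) (i : ι) :
    Disjoint (K i (derivStage K β)) (derivStage K o) := by
  rw [derivStage_eq K o]
  exact disjoint_compl_right.mono_left <|
    subset_iUnion_of_subset ⟨β, h⟩ (subset_iUnion (fun i => K i (derivStage K β)) i)

theorem measurableSet_derivStage [MeasurableSpace X] [Countable ι]
    (hK : ∀ i Y, MeasurableSet (K i Y)) {o : Ordinal.{0}} (ho : o < ω₁) :
    MeasurableSet (derivStage K o) := by
  have : Countable (Iio o) := (countable_Iio_iff_lt_omega_one.2 ho).to_subtype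
  rw [derivStage_eq]
  exact (MeasurableSet.iUnion fun β => .iUnion fun i => hK i _).compl

/-- By `hK`, an `i` that removes points at some stage removes none at any later stage, so the
unstable stages below `ω₁` would inject into the countable `ι`. -/
theorem exists_derivStage_stable [Countable ι]
    (hK : ∀ i Y Y', Y' ⊆ Y → (K i Y).Nonempty → Disjoint (K i Y) Y' → Disjoint (K i Y') Y') :
    ∃ o < ω₁, ∀ i, Disjoint (K i (derivStage K o)) (derivStage K o) := by
  by_contra! h
  choose i hi using fun o : Iio ω₁ => h o o.2
  have hinj : Function.Injective i := by
    refine .of_lt_imp_ne fun β o hβo hi_eq => hi o ?_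
    have hne : (K (i β) (derivStage K β)).Nonempty :=
      (not_disjoint_iff.1 (hi β)).elim fun x hx => ⟨x, hx.1⟩
    rw [← hi_eq]
    exact hK _ _ _ (derivStage_antitone K hβo.le) hne (disjoint_derivStage K hβo _)
  exact (lt_irrefl ω₁) (countable_Iio_iff_lt_omega_one.1 (countable_coe_iff.1 hinj.countable))

end Derivative

theorem exists_measurable_coloring_of_forall_exists_mem {X J : Type*} [MeasurableSpace X]
    [Countable J] {H : ℕ → Set (X × X)} {B : J → Set X} {k : J → ℕ}
    (hB : ∀ j, MeasurableSet (B j)) (hBH : ∀ j, Disjoint (B j ×ˢ B j) (H (k j)))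
    (hcover : ∀ x, ∃ j, x ∈ B j) :
    ∃ (c : X → ℕ) (k' : ℕ → ℕ), Measurable c ∧ ∀ x y, c x = c y → (x, y) ∉ H (k' (c x)) := by
  classical
  rcases isEmpty_or_nonempty J with hJ | hJ
  · have : IsEmpty X := ⟨fun x => (hcover x).elim fun j _ => isEmptyElim j⟩
    exact ⟨fun _ => 0, id, measurable_of_empty _, fun x => isEmptyElim x⟩
  obtain ⟨e, he⟩ := exists_surjective_nat J
  have hcover' (x : X) : ∃ m, x ∈ B (e m) :=
    (hcover x).elim fun j hj => (he j).elim fun m hm => ⟨m, hm ▸ hj⟩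
  refine ⟨fun x => Nat.find (hcover' x), k ∘ e, measurable_find hcover' fun m => hB (e m),
    fun x y hxy => disjoint_left.1 (hBH _) (mk_mem_prod (Nat.find_spec (hcover' x)) ?_)⟩
  exact hxy ▸ Nat.find_spec (hcover' y)

theorem exists_seq_of_forall_exists {α : Type*} {P : ℕ → α → Prop} {Q : ℕ → α → α → Prop}
    {a : α} (h₀ : P 0 a) (h : ∀ n a, P n a → ∃ b, P (n + 1) b ∧ Q n a b) :
    ∃ f : ℕ → α, ∀ n, P n (f n) ∧ Q n (f n) (f (n + 1)) := by
  choose! next hnext using h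
  let f : ℕ → α := fun n => Nat.rec a next n
  have hf : ∀ n, P n (f n) := fun n => Nat.rec h₀ (fun n ih => (hnext n _ ih).1) n
  exact ⟨f, fun n => ⟨hf n, (hnext n _ (hf n)).2⟩⟩

theorem tendsto_atTop_of_forall_lt_eq {β : Type*} [TopologicalSpace β] {f : ℕ → ℕ → β}
    (h : ∀ N j, j < N → f (N + 1) j = f N j) :
    Tendsto f atTop (𝓝 fun j => f (j + 1) j) := by
  refine tendsto_pi_nhds.2 fun j => tendsto_atTop_of_eventually_const (i₀ := j + 1) ?_
  intro N hN
  induction N, hN using Nat.le_induction with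
  | base => rfl
  | succ N hN ih => rw [h N j (by omega), ih]

def seqPrefix {α : Type*} (z : ℕ → α) (N : ℕ) : List α := List.ofFn fun j : Fin N => z j

@[simp] theorem length_seqPrefix {α : Type*} (z : ℕ → α) (N : ℕ) :
    (seqPrefix z N).length = N := by
  simp [seqPrefix]

theorem seqPrefix_succ {α : Type*} (z : ℕ → α) (N : ℕ) :
    seqPrefix z (N + 1) = seqPrefix z N ++ [z N] := by
  rw [seqPrefix, List.ofFn_succ']
  simp [seqPrefix]

theorem seqPrefix_cat (t : List Bool) (z : ℕ → Bool) (M : ℕ) :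
    seqPrefix (cat t z) (t.length + M) = t ++ seqPrefix z M := by
  rw [seqPrefix, List.ofFn_add]
  congr 1
  · refine List.ext_get (by simp) fun j h _ => ?_
    simp [cat]
  · refine congrArg List.ofFn (funext fun j => ?_)
    simp [cat]

namespace G0Dichotomy

/-- The `n`-th finite approximation of `G_ℕ` has the strings of length `n` as vertices and, for
`k + 1 + v.length = n`, the edge `edge k v` between `s k ++ false :: v` and `s k ++ true :: v`.
A configuration assigns a code in `ℕ^ℕ` to each vertex (a point of `X` via `π`) and to each edge
(a witness in `R k` for the adjacency of its endpoints). -/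
inductive Slot
  | vertex (u : List Bool)
  | edge (k : ℕ) (v : List Bool)
  deriving Countable

namespace Slot

def Live (n : ℕ) : Slot → Prop
  | vertex u => u.length = n
  | edge k v => k + 1 + v.length = n

def snoc : Slot → Bool → Slot
  | vertex u, i => vertex (u ++ [i])
  | edge k v, i => edge k (v ++ [i])

theorem finite_setOf_live (n : ℕ) : {x : Slot | x.Live n}.Finite := by
  refine (((List.finite_length_eq Bool n).image vertex).union
    ((finite_Iio n).image2 edge (List.finite_length_le Bool n))).subset ?_
  rintro (u | ⟨k, v⟩) hx <;> simp only [mem_ofPred_eq, Live] at hx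
  · exact .inl ⟨u, hx, rfl⟩
  · exact .inr ⟨k, by simp; omega, v, by simp; omega, rfl⟩

end Slot

instance (n : ℕ) : Finite {x : Slot // x.Live n} := (Slot.finite_setOf_live n).to_subtype

abbrev Config := Slot → ℕ → ℕ

abbrev Approx (n : ℕ) := {x : Slot // x.Live n} → Fin n → ℕ

def trunc (n : ℕ) (c : Config) : Approx n := fun x j => c x j

theorem measurable_trunc (n : ℕ) : Measurable (trunc n) := by
  unfold trunc
  fun_prop

/-- The slot `x.snoc i` of level `n + 1` is filled from the slot `x` of `d i`, and the new edge
`edge n []` gets the witness `w`. -/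
def join (n : ℕ) (d : Bool → Config) (w : ℕ → ℕ) : Config
  | .vertex u => d (u.getLastD false) (.vertex u.dropLast)
  | .edge k v => if k = n then w else d (v.getLastD false) (.edge k v.dropLast)

theorem join_snoc {n : ℕ} {x : Slot} (hx : x.Live n) (d : Bool → Config) (w : ℕ → ℕ)
    (i : Bool) : join n d w (x.snoc i) = d i x := by
  cases x with
  | vertex u => simp [join, Slot.snoc]
  | edge k v =>
    have : k ≠ n := by simp only [Slot.Live] at hx; omega
    simp [join, Slot.snoc, this]

def Refines (n : ℕ) (c c' : Config) : Prop :=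
  ∀ x : Slot, x.Live n → ∀ i, ∀ j < n, c' (x.snoc i) j = c x j

theorem refines_join {n : ℕ} {c : Config} {d : Bool → Config}
    (hd : ∀ i, trunc n (d i) = trunc n c) (w : ℕ → ℕ) : Refines n c (join n d w) := by
  intro x hx i j hj
  rw [join_snoc hx]
  exact congrFun (congrFun (hd i) ⟨x, hx⟩) ⟨j, hj⟩

/-- Digit `j` of the code of `z` is read at level `j + 1`; refinements never change it again. -/
def code (cs : ℕ → Config) (z : ℕ → Bool) : ℕ → ℕ :=
  fun j => cs (j + 1) (.vertex (seqPrefix z (j + 1))) j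

theorem continuous_code (cs : ℕ → Config) : Continuous (code cs) := by
  refine continuous_pi fun j => ?_
  have : (fun z => code cs z j) =
      (fun v : Fin (j + 1) → Bool => cs (j + 1) (.vertex (List.ofFn v)) j) ∘
        fun z i => z i := rfl
  rw [this]
  exact continuous_of_discreteTopology.comp (continuous_pi fun i => continuous_apply _)

theorem tendsto_code {cs : ℕ → Config} (hcs : ∀ n, Refines n (cs n) (cs (n + 1)))
    (z : ℕ → Bool) :
    Tendsto (fun N => cs N (.vertex (seqPrefix z N))) atTop (𝓝 (code cs z)) := by
  refine tendsto_atTop_of_forall_lt_eq fun N j hj => ?_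
  rw [seqPrefix_succ]
  exact hcs N (.vertex _) (length_seqPrefix z N) (z N) j hj

section Configurations

variable {X : Type*} (s : ℕ → List Bool) (π : (ℕ → ℕ) → X)
  (R : ℕ → Set ((ℕ → ℕ) × (ℕ → ℕ) × (ℕ → ℕ))) (H : ℕ → Set (X × X))

def IsConfig (n : ℕ) (Y : Set X) (c : Config) : Prop :=
  (∀ u : List Bool, u.length = n → π (c (.vertex u)) ∈ Y) ∧
  ∀ k v, k + 1 + v.length = n →
    (c (.edge k v), c (.vertex (s k ++ false :: v)), c (.vertex (s k ++ true :: v))) ∈ R k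

def realizations (n : ℕ) (p : Approx n) (Y : Set X) : Set X :=
  (fun c : Config => π (c (.vertex (s n)))) '' {c | IsConfig s π R n Y c ∧ trunc n c = p}

/-- A Borel `H n`-independent superset of the realizations of `p` in `Y` if these are nonempty
and such a set exists (as it does when `p` is terminal in a Borel `Y`), and `∅` otherwise. -/
def killSet [MeasurableSpace X] (n : ℕ) (p : Approx n) (Y : Set X) : Set X :=
  open Classical in
  if h : (realizations s π R n p Y).Nonempty ∧
      ∃ D, MeasurableSet D ∧ realizations s π R n p Y ⊆ D ∧ Disjoint (D ×ˢ D) (H n)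
  then h.2.choose else ∅

variable {s π R H}

theorem IsConfig.mono {n : ℕ} {Y Y' : Set X} (h : Y ⊆ Y') {c : Config}
    (hc : IsConfig s π R n Y c) : IsConfig s π R n Y' c :=
  ⟨fun u hu => h (hc.1 u hu), hc.2⟩

theorem realizations_mono {n : ℕ} {p : Approx n} {Y Y' : Set X} (h : Y ⊆ Y') :
    realizations s π R n p Y ⊆ realizations s π R n p Y' :=
  image_mono fun _ hc => ⟨hc.1.mono h, hc.2⟩

theorem realizations_subset (hs : ∀ n, (s n).length = n) {n : ℕ} {p : Approx n} {Y : Set X} :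
    realizations s π R n p Y ⊆ Y := by
  rintro _ ⟨c, hc, rfl⟩
  exact hc.1.1 _ (hs n)

theorem mem_realizations {n : ℕ} {Y : Set X} {c : Config} (hc : IsConfig s π R n Y c) :
    π (c (.vertex (s n))) ∈ realizations s π R n (trunc n c) Y :=
  ⟨c, ⟨hc, rfl⟩, rfl⟩

theorem analyticSet_realizations [TopologicalSpace X] [MeasurableSpace X] [BorelSpace X]
    (hπ : Continuous π) (hR : ∀ n, IsClosed (R n)) {n : ℕ} (p : Approx n) {Y : Set X}
    (hY : MeasurableSet Y) : AnalyticSet (realizations s π R n p Y) := by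
  have hconfig : MeasurableSet {c | IsConfig s π R n Y c} := by
    simp only [IsConfig, ofPred_and, ofPred_forall]
    refine .inter (.iInter fun u => .iInter fun _ => ?_)
      (.iInter fun k => .iInter fun v => .iInter fun _ => ?_)
    · exact (hπ.measurable.comp (measurable_pi_apply _)) hY
    · exact ((measurable_pi_apply _).prodMk ((measurable_pi_apply _).prodMk
        (measurable_pi_apply _))) (hR k).measurableSet
  exact (hconfig.inter (measurable_trunc n (measurableSet_singleton p))).analyticSet
    |>.image_of_continuous (hπ.comp (continuous_apply _))

theorem isConfig_join (hs : ∀ n, (s n).length = n) {n : ℕ} {Y : Set X} {d : Bool → Config}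
    (hd : ∀ i, IsConfig s π R n Y (d i)) {w : ℕ → ℕ}
    (hw : (w, d false (.vertex (s n)), d true (.vertex (s n))) ∈ R n) :
    IsConfig s π R (n + 1) Y (join n d w) := by
  constructor
  · intro u hu
    obtain ⟨u, i, rfl⟩ := u.eq_nil_or_concat'.resolve_left (by rintro rfl; simp at hu)
    have hu : (Slot.vertex u).Live n := by simpa [Slot.Live] using hu
    exact (join_snoc hu d w i).symm ▸ (hd i).1 u hu
  · intro k v hkv
    rcases v.eq_nil_or_concat' with rfl | ⟨v, i, rfl⟩
    · obtain rfl : k = n := by simpa using hkv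
      simpa [join] using hw
    · have hv : (Slot.edge k v).Live n := by
        simp only [Slot.Live, List.length_append, List.length_singleton] at hkv ⊢; omega
      have hvert (b : Bool) : (Slot.vertex (s k ++ b :: v)).Live n := by
        simp only [Slot.Live] at hv ⊢; simp [hs]; omega
      have hsnoc (b : Bool) :
          Slot.vertex (s k ++ b :: (v ++ [i])) = (Slot.vertex (s k ++ b :: v)).snoc i := by
        simp [Slot.snoc]
      rw [hsnoc, hsnoc, join_snoc (hvert false), join_snoc (hvert true)]
      exact (join_snoc hv d w i).symm ▸ (hd i).2 k v hv

theorem exists_seq_isConfig_refines (hπs : Function.Surjective π) {Y : Set X}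
    (hYne : Y.Nonempty)
    (hstep : ∀ n c, IsConfig s π R n Y c → ∃ c', IsConfig s π R (n + 1) Y c' ∧ Refines n c c') :
    ∃ cs : ℕ → Config, ∀ n, IsConfig s π R n Y (cs n) ∧ Refines n (cs n) (cs (n + 1)) := by
  obtain ⟨y, hy⟩ := hYne
  obtain ⟨b, rfl⟩ := hπs y
  exact exists_seq_of_forall_exists (a := fun _ => b) ⟨fun _ _ => hy, fun _ _ h => by omega⟩ hstep

theorem exists_witness_code_cat (hs : ∀ n, (s n).length = n) (hR : ∀ n, IsClosed (R n))
    {Y : Set X} {cs : ℕ → Config}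
    (hcs : ∀ n, IsConfig s π R n Y (cs n) ∧ Refines n (cs n) (cs (n + 1))) (k : ℕ)
    (z : ℕ → Bool) :
    ∃ w, (w, code cs (cat (s k ++ [false]) z), code cs (cat (s k ++ [true]) z)) ∈ R k := by
  set e : ℕ → ℕ → ℕ := fun M => cs (k + 1 + M) (.edge k (seqPrefix z M))
  have he : Tendsto e atTop (𝓝 fun j => e (j + 1) j) := by
    refine tendsto_atTop_of_forall_lt_eq fun M j hj => ?_
    simp only [e, seqPrefix_succ]
    exact (hcs (k + 1 + M)).2 (.edge k _) (by simp [Slot.Live]) (z M) j (by omega)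
  have hvert (i : Bool) : Tendsto (fun M => cs (k + 1 + M) (.vertex (s k ++ i :: seqPrefix z M)))
      atTop (𝓝 (code cs (cat (s k ++ [i]) z))) := by
    refine ((tendsto_code (fun n => (hcs n).2) (cat (s k ++ [i]) z)).comp
      (tendsto_atTop_atTop.2 fun b => ⟨b, fun M hM => by omega⟩ :
        Tendsto (k + 1 + ·) atTop atTop)).congr fun M => ?_
    have hcat := seqPrefix_cat (s k ++ [i]) z M
    rw [List.length_append, hs, List.length_singleton] at hcat
    simp [hcat]
  exact ⟨_, (hR k).mem_of_tendsto (he.prodMk_nhds ((hvert false).prodMk_nhds (hvert true)))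
    (.of_forall fun M => (hcs _).1.2 k _ (by simp))⟩

section KillSet

variable [MeasurableSpace X] {n : ℕ} {p : Approx n} {Y : Set X}

theorem measurableSet_killSet : MeasurableSet (killSet s π R H n p Y) := by
  unfold killSet
  split_ifs with h
  exacts [h.2.choose_spec.1, .empty]

theorem disjoint_killSet_prod :
    Disjoint (killSet s π R H n p Y ×ˢ killSet s π R H n p Y) (H n) := by
  unfold killSet
  split_ifs with h
  exacts [h.2.choose_spec.2.2, by simp]

theorem nonempty_realizations_of_killSet (h : (killSet s π R H n p Y).Nonempty) :
    (realizations s π R n p Y).Nonempty := by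
  unfold killSet at h
  split_ifs at h with hZ
  exacts [hZ.1, absurd h not_nonempty_empty]

theorem realizations_subset_killSet_of_nonempty (h : (killSet s π R H n p Y).Nonempty) :
    realizations s π R n p Y ⊆ killSet s π R H n p Y := by
  unfold killSet at h ⊢
  split_ifs at h ⊢ with hZ
  exacts [hZ.2.choose_spec.2.1, absurd h not_nonempty_empty]

theorem realizations_subset_killSet [TopologicalSpace X] [PolishSpace X] [BorelSpace X]
    (hπ : Continuous π) (hR : ∀ n, IsClosed (R n)) (hH : ∀ n, MeasurableSet (H n))
    (hHsymm : ∀ n x y, (x, y) ∈ H n → (y, x) ∈ H n) (hY : MeasurableSet Y)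
    (hterm : Disjoint (realizations s π R n p Y ×ˢ realizations s π R n p Y) (H n)) :
    realizations s π R n p Y ⊆ killSet s π R H n p Y := by
  rcases (realizations s π R n p Y).eq_empty_or_nonempty with hZ | hZ
  · exact hZ ▸ empty_subset _
  have hD := (analyticSet_realizations hπ hR p hY).exists_measurableSet_superset_disjoint_prod
    (hH n) (hHsymm n) hterm
  unfold killSet
  rw [dif_pos ⟨hZ, hD⟩]
  exact hD.choose_spec.2.1

/-- A realization in `Y'` is one in `Y`, hence lies in `killSet … Y`, which misses `Y'`. -/
theorem disjoint_killSet_of_subset (hs : ∀ n, (s n).length = n) {Y' : Set X} (hY' : Y' ⊆ Y)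
    (hne : (killSet s π R H n p Y).Nonempty) (hdisj : Disjoint (killSet s π R H n p Y) Y') :
    Disjoint (killSet s π R H n p Y') Y' := by
  refine disjoint_left.2 fun x hx _ => ?_
  obtain ⟨y, hy⟩ := nonempty_realizations_of_killSet ⟨x, hx⟩
  exact disjoint_left.1 hdisj (realizations_subset_killSet_of_nonempty hne
    (realizations_mono hY' hy)) (realizations_subset hs hy)

end KillSet

variable [TopologicalSpace X] [PolishSpace X] [MeasurableSpace X] [BorelSpace X]

theorem exists_refines (hs : ∀ n, (s n).length = n) (hπ : Continuous π)
    (hR : ∀ n, IsClosed (R n)) (hRH : ∀ n b₀ b₁, (π b₀, π b₁) ∈ H n ↔ ∃ w, (w, b₀, b₁) ∈ R n)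
    (hH : ∀ n, MeasurableSet (H n)) (hHsymm : ∀ n x y, (x, y) ∈ H n → (y, x) ∈ H n)
    {Y : Set X} (hY : MeasurableSet Y) (hstable : ∀ n p, Disjoint (killSet s π R H n p Y) Y)
    {n : ℕ} {c : Config} (hc : IsConfig s π R n Y c) :
    ∃ c', IsConfig s π R (n + 1) Y c' ∧ Refines n c c' := by
  have hnonterm : ¬ Disjoint (realizations s π R n (trunc n c) Y ×ˢ
      realizations s π R n (trunc n c) Y) (H n) := fun hterm =>
    disjoint_left.1 (hstable n (trunc n c))
      (realizations_subset_killSet hπ hR hH hHsymm hY hterm (mem_realizations hc))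
      (realizations_subset hs (mem_realizations hc))
  obtain ⟨⟨_, _⟩, ⟨⟨d₀, ⟨hd₀, ht₀⟩, rfl⟩, ⟨d₁, ⟨hd₁, ht₁⟩, rfl⟩⟩, hadj⟩ :=
    not_disjoint_iff.1 hnonterm
  obtain ⟨w, hw⟩ := (hRH n _ _).1 hadj
  exact ⟨join n (fun i => cond i d₁ d₀) w, isConfig_join hs (Bool.forall_bool.2 ⟨hd₀, hd₁⟩) hw,
    refines_join (Bool.forall_bool.2 ⟨ht₀, ht₁⟩) w⟩

theorem dichotomy_of_presentation (hs : ∀ n, (s n).length = n) (hπ : Continuous π)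
    (hπs : Function.Surjective π) (hR : ∀ n, IsClosed (R n))
    (hRH : ∀ n b₀ b₁, (π b₀, π b₁) ∈ H n ↔ ∃ w, (w, b₀, b₁) ∈ R n)
    (hH : ∀ n, MeasurableSet (H n)) (hHsymm : ∀ n x y, (x, y) ∈ H n → (y, x) ∈ H n) :
    (∃ (c : X → ℕ) (k : ℕ → ℕ), Measurable c ∧ ∀ x y, c x = c y → (x, y) ∉ H (k (c x))) ∨
    ∃ g : (ℕ → Bool) → X, Continuous g ∧
      ∀ n z, (g (cat (s n ++ [false]) z), g (cat (s n ++ [true]) z)) ∈ H n := by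
  set K : (Σ n, Approx n) → Set X → Set X := fun r => killSet s π R H r.1 r.2
  obtain ⟨o, ho, hstable⟩ := exists_derivStage_stable K fun _ _ _ =>
    disjoint_killSet_of_subset hs
  rcases (derivStage K o).eq_empty_or_nonempty with hempty | hne
  · have : Countable (Iio o) := (countable_Iio_iff_lt_omega_one.2 ho).to_subtype
    refine .inl (exists_measurable_coloring_of_forall_exists_mem
      (B := fun j : Iio o × (Σ n, Approx n) => K j.2 (derivStage K j.1)) (k := fun j => j.2.1)
      (fun _ => measurableSet_killSet) (fun _ => disjoint_killSet_prod) fun x => ?_)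
    have hx : x ∈ (derivStage K o)ᶜ := by simp [hempty]
    simp only [derivStage_eq K o, compl_compl, mem_iUnion] at hx
    obtain ⟨β, r, hx⟩ := hx
    exact ⟨(β, r), hx⟩
  · obtain ⟨cs, hcs⟩ := exists_seq_isConfig_refines hπs hne fun n c =>
      exists_refines hs hπ hR hRH hH hHsymm
        (measurableSet_derivStage K (fun _ _ => measurableSet_killSet) ho)
        (fun n p => hstable ⟨n, p⟩)
    exact .inr ⟨fun z => π (code cs z), hπ.comp (continuous_code cs), fun n z =>
      (hRH n _ _).2 (exists_witness_code_cat hs hR hcs n z)⟩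

end Configurations

theorem dichotomy {X : Type*} [TopologicalSpace X] [PolishSpace X] [MeasurableSpace X]
    [BorelSpace X] {s : ℕ → List Bool} (hs : ∀ n, (s n).length = n) {H : ℕ → Set (X × X)}
    (hH : ∀ n, MeasurableSet (H n)) (hHsymm : ∀ n x y, (x, y) ∈ H n → (y, x) ∈ H n) :
    (∃ (c : X → ℕ) (k : ℕ → ℕ), Measurable c ∧ ∀ x y, c x = c y → (x, y) ∉ H (k (c x))) ∨
    ∃ g : (ℕ → Bool) → X, Continuous g ∧
      ∀ n z, (g (cat (s n ++ [false]) z), g (cat (s n ++ [true]) z)) ∈ H n := by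
  rcases isEmpty_or_nonempty X with hX | hX
  · exact .inl ⟨fun _ => 0, id, measurable_of_empty _, fun x => isEmptyElim x⟩
  obtain ⟨π, hπ, hπs⟩ := PolishSpace.exists_nat_nat_continuous_surjective X
  choose R hR hRH using fun n =>
    ((hπ.measurable.prodMap hπ.measurable) (hH n)).analyticSet.exists_isClosed_projection
  exact dichotomy_of_presentation hs hπ hπs hR (fun n b₀ b₁ => hRH n (b₀, b₁)) hH hHsymm

end G0Dichotomy

theorem equivariant_G0_dichotomy_general {Γ X : Type*} [Group Γ] [Countable Γ]
    [MeasurableSpace Γ] [DiscreteMeasurableSpace Γ]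
    [MeasurableSpace X] [StandardBorelSpace X]
    (G : Set (X × X)) (hG : IsGraph G) (hGBorel : MeasurableSet G)
    (a : Γ → X → X) (haBorel : ∀ γ : Γ, Measurable (a γ))
    (haMul : ∀ γ δ x, a (γ * δ) x = a γ (a δ x))
    (γseq : ℕ → Γ) (sseq : ℕ → List Bool) (hgen : GenericSeq γseq sseq) :
    (∃ f : X → ℕ × Γ, IsBorelAColoring G a f) ∨
    ∃ F : Γ × (ℕ → Bool) → X, Measurable F ∧
      (∀ (h : Γ) (p : Γ × (ℕ → Bool)), F (aGamma h p) = a h (F p)) ∧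
      ∀ p q : Γ × (ℕ → Bool), (p, q) ∈ GGamma γseq sseq → (F p, F q) ∈ G := by
  let := upgradeStandardBorel X
  rcases G0Dichotomy.dichotomy hgen.1 (H := fun n => Prod.map (a (γseq n)) (a (γseq n)) ⁻¹' G)
    (fun n => ((haBorel _).prodMap (haBorel _)) hGBorel) (fun n x y => hG.1 _ _)
    with ⟨c, k, hc, hck⟩ | ⟨g, hg, hgH⟩
  · refine .inl ⟨fun x => (c x, γseq (k (c x))),
      (measurable_from_nat (f := fun m => (m, γseq (k m)))).comp hc, ?_⟩
    rintro n y y' h h' hy hy'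
    simp only [Prod.mk.injEq] at hy hy'
    obtain ⟨rfl, rfl⟩ := hy
    obtain ⟨hcy, rfl⟩ := hy'
    rw [hcy]
    exact hck y y' hcy.symm
  · refine .inr ⟨fun p => a p.1 (g p.2), measurable_from_prod_countable_right fun γ =>
      (haBorel γ).comp hg.measurable, fun h p => haMul h p.1 (g p.2), ?_⟩
    rintro ⟨γ, y⟩ ⟨γ', y'⟩ ⟨(rfl : γ = γ'), n, z, (rfl : γseq n = γ), ⟨rfl, rfl⟩ | ⟨rfl, rfl⟩⟩
    · exact hgH n z
    · exact hG.1 _ _ (hgH n z)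

/-- The equivariant `G₀` dichotomy: for a Borel graph `G` on a standard Borel
space `X` and a Borel action `a` of a countable group `Γ` on `X`, either `(G, a)`
admits a Borel a-coloring, or there is a Borel equivariant homomorphism from
`(G_Γ, a_Γ)` to `(G, a)`. -/
theorem equivariant_G0_dichotomy {Γ X : Type*} [Group Γ] [Countable Γ]
    [MeasurableSpace Γ] [DiscreteMeasurableSpace Γ]
    [MeasurableSpace X] [StandardBorelSpace X]
    (G : Set (X × X)) (hG : IsGraph G) (hGBorel : MeasurableSet G)
    (a : Γ → X → X) (haBorel : ∀ γ : Γ, Measurable (a γ))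
    (haOne : ∀ x, a 1 x = x) (haMul : ∀ γ δ x, a (γ * δ) x = a γ (a δ x))
    (γseq : ℕ → Γ) (sseq : ℕ → List Bool) (hgen : GenericSeq γseq sseq) :
    (∃ f : X → ℕ × Γ, IsBorelAColoring G a f) ∨
    ∃ F : Γ × (ℕ → Bool) → X, Measurable F ∧
      (∀ (h : Γ) (p : Γ × (ℕ → Bool)), F (aGamma h p) = a h (F p)) ∧
      ∀ p q : Γ × (ℕ → Bool), (p, q) ∈ GGamma γseq sseq → (F p, F q) ∈ G :=
  equivariant_G0_dichotomy_general G hG hGBorel a haBorel haMul γseq sseq hgen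
end

section
/- Let Γ ⊆ Aut(Cay(ℤ², E)) be a subgroup such that γ(0) = 0 for all γ ∈ Γ and ⟨γ(n,m)⟩⁻¹ γ ⟨n,m⟩ ∈ Γ for all γ ∈ Γ and (n,m) ∈ ℤ². Then for every x ∈ Fr_Γ, the map (a, b) ↦ [⟨a,b⟩ · x] is a graph isomorphism from Cay(ℤ², E) onto the connected component of [x] in S̃_Γ; in particular, S̃_Γ is locally a square lattice. -/
namespace Paper

variable {X Y : Type*}

/-- A (simple, directed) path in a graph, as a nonempty list of distinct
consecutively-adjacent vertices. -/
def IsPathL (G : Set (X × X)) (p : List X) : Prop :=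
  p ≠ [] ∧ p.Nodup ∧ p.Chain' fun a b => (a, b) ∈ G

/-- A straight line (segment): a directed path such that no other path of the same
or shorter length has the same endpoints. -/
def IsStraight (G : Set (X × X)) (p : List X) : Prop :=
  IsPathL G p ∧ ∀ q : List X, IsPathL G q → q.head? = p.head? →
    q.getLast? = p.getLast? → q.length ≤ p.length → q = p

/-- The directed edges `e` and `e'` lie on a common straight line. -/
def OnLine (G : Set (X × X)) (e e' : X × X) : Prop :=
  ∃ p, IsStraight G p ∧ [e.1, e.2] <:+: p ∧ [e'.1, e'.2] <:+: p

/-- The vertices `x` and `y` lie on a common straight line. -/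
def VertsOnLine (G : Set (X × X)) (x y : X) : Prop :=
  ∃ p, IsStraight G p ∧ x ∈ p ∧ y ∈ p

/-- A rectangle: a simple directed cycle divided into 4 straight lines. -/
def IsRect (G : Set (X × X)) (p₁ p₂ p₃ p₄ : List X) : Prop :=
  IsStraight G p₁ ∧ IsStraight G p₂ ∧ IsStraight G p₃ ∧ IsStraight G p₄ ∧
  p₁.getLast? = p₂.head? ∧ p₂.getLast? = p₃.head? ∧
  p₃.getLast? = p₄.head? ∧ p₄.getLast? = p₁.head? ∧
  (p₁ ++ p₂.tail ++ p₃.tail ++ p₄.tail).dropLast.Nodup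

/-- `e ∥ e'`: the directed edges lie on a common straight line, or `-e` and `e'`
are opposite sides of a rectangle. -/
def Parallel (G : Set (X × X)) (e e' : X × X) : Prop :=
  OnLine G e e' ∨
  ∃ p₁ p₂ p₃ p₄, IsRect G p₁ p₂ p₃ p₄ ∧
    (([e.2, e.1] <:+: p₁ ∧ [e'.1, e'.2] <:+: p₃) ∨
     ([e.2, e.1] <:+: p₃ ∧ [e'.1, e'.2] <:+: p₁) ∨
     ([e.2, e.1] <:+: p₂ ∧ [e'.1, e'.2] <:+: p₄) ∨
     ([e.2, e.1] <:+: p₄ ∧ [e'.1, e'.2] <:+: p₂))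

/-- `e ⊥ e'`: directed edges of `G` in the same component which are neither
parallel nor anti-parallel. -/
def Perp (G : Set (X × X)) (e e' : X × X) : Prop :=
  e ∈ G ∧ e' ∈ G ∧ Conn G e.1 e'.1 ∧ ¬ Parallel G e e' ∧ ¬ Parallel G (neg e) e'

/-- Adjacency in the Cayley graph of `ℤ²` with the standard generating set. -/
def LatAdj (p q : ℤ × ℤ) : Prop :=
  q = p + (1, 0) ∨ q = p + (-1, 0) ∨ q = p + (0, 1) ∨ q = p + (0, -1)

/-- A graph is locally a square lattice if every connected component is
isomorphic to the Cayley graph of `ℤ²` with the standard generating set. -/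
def LocallySquareLattice (G : Set (X × X)) : Prop :=
  ∀ x : X, ∃ φ : ℤ × ℤ → X, Function.Injective φ ∧ φ 0 = x ∧
    (∀ p q, LatAdj p q ↔ (φ p, φ q) ∈ G) ∧
    ∀ y, Conn G x y → ∃ p, φ p = y

/-- A Borel 2-coloring of the perpendicularity graph `⊥_G`. -/
def HasBorelTwoColoring [MeasurableSpace X] (G : Set (X × X)) : Prop :=
  ∃ c : X × X → Bool, Measurable c ∧ ∀ e e', Perp G e e' → c e ≠ c e'

/-- The standard generating set of `ℤ²`. -/
def stdGen : Set (ℤ × ℤ) := {(1, 0), (-1, 0), (0, 1), (0, -1)}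

/-- `G` is the Schreier graph of a free Borel action of `ℤ²` (with the standard
generating set). -/
def IsSchreierZ2 [MeasurableSpace X] (G : Set (X × X)) : Prop :=
  ∃ a : ℤ × ℤ → X → X,
    (∀ g, Measurable (a g)) ∧
    (∀ x, a 0 x = x) ∧
    (∀ g h x, a (g + h) x = a g (a h x)) ∧
    (∀ g x, a g x = x → g = 0) ∧
    G = {p | ∃ g ∈ stdGen, p.2 = a g p.1}

end Paper
namespace Paper

/-- The automorphism group of the Cayley graph of `ℤ²` (with the standard
generating set), as a subgroup of the permutations of `ℤ²`. -/
def latAut : Subgroup (Equiv.Perm (ℤ × ℤ)) where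
  carrier := {γ | ∀ p q, LatAdj p q ↔ LatAdj (γ p) (γ q)}
  one_mem' := by intro p q; exact Iff.rfl
  mul_mem' := by
    intro a b ha hb p q
    simpa [Equiv.Perm.mul_apply] using (hb p q).trans (ha (b p) (b q))
  inv_mem' := by
    intro a ha p q
    simpa using (ha (a⁻¹ p) (a⁻¹ q)).symm

/-- The translation automorphism `⟨v⟩` of the Cayley graph of `ℤ²`. -/
def trAut (v : ℤ × ℤ) : Equiv.Perm (ℤ × ℤ) := Equiv.addLeft v

/-- The shift action of `Aut(Cay(ℤ², E))` on `[0,1]^{ℤ²}`: `γ · x = x ∘ γ⁻¹`. -/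
def shiftI (g : Equiv.Perm (ℤ × ℤ)) (x : (ℤ × ℤ) → unitInterval) :
    (ℤ × ℤ) → unitInterval := fun p => x (g⁻¹ p)

/-- The free part of the shift action of `Aut(Cay(ℤ², E))` on `[0,1]^{ℤ²}`. -/
def FrSet : Set ((ℤ × ℤ) → unitInterval) :=
  {x | ∀ g ∈ latAut, g ≠ 1 → shiftI g x ≠ x}

/-- A point of the free part. -/
abbrev FrPt : Type := {x : (ℤ × ℤ) → unitInterval // x ∈ FrSet}

/-- The orbit equivalence relation of (the restriction to) `Γ` on the free part. -/
def frSetoid (Γ : Subgroup (Equiv.Perm (ℤ × ℤ))) : Setoid FrPt where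
  r x y := ∃ γ ∈ Γ, shiftI γ x.val = y.val
  iseqv := by
    constructor
    · intro x
      exact ⟨1, Γ.one_mem, by funext p; simp [shiftI]⟩
    · rintro x y ⟨γ, hγ, h⟩
      refine ⟨γ⁻¹, Γ.inv_mem hγ, ?_⟩
      funext p
      rw [← h]
      simp [shiftI]
    · rintro x y z ⟨γ, hγ, h⟩ ⟨δ, hδ, h'⟩
      refine ⟨δ * γ, Γ.mul_mem hδ hγ, ?_⟩
      rw [← h', ← h]
      funext p
      simp [shiftI, mul_inv_rev, Equiv.Perm.mul_apply]

/-- The graph `S̃_Γ` on `Fr_Γ/Γ`, with edges `([x], [⟨v⟩ · x])` for `v` in the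
standard generating set. -/
def Stilde (Γ : Subgroup (Equiv.Perm (ℤ × ℤ))) :
    Set (Quotient (frSetoid Γ) × Quotient (frSetoid Γ)) :=
  {p | ∃ (x : FrPt) (v : ℤ × ℤ), v ∈ stdGen ∧
    ∃ hv : shiftI (trAut v) x.val ∈ FrSet,
      p.1 = Quotient.mk (frSetoid Γ) x ∧
      p.2 = Quotient.mk (frSetoid Γ) ⟨shiftI (trAut v) x.val, hv⟩}

end Paper

open Paper

/-!
Write `φ v = [⟨v⟩ · x]`. Since the action of `Aut(Cay(ℤ², E))` on `Fr` is free, an identity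
`[g · x] = [h · x]` between orbit classes lifts to an identity `γ g = h` of automorphisms with
`γ ∈ Γ`. Evaluating such identities at a suitable point, and using that `Γ` fixes `0`, turns
`φ v = φ w` into `v = w` and an edge `(φ v, φ w)` into `w - v ∈ E`. Conversely, closure of `Γ`
under conjugation by translations rewrites `⟨a⟩ γ` as `ρ ⟨u⟩` with `ρ ∈ Γ`, so every neighbour
of some `φ v` is again a value of `φ`.
-/

namespace Paper

lemma shiftI_mul (g h : Equiv.Perm (ℤ × ℤ)) (x : (ℤ × ℤ) → unitInterval) :
    shiftI (g * h) x = shiftI g (shiftI h x) := rfl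

lemma shiftI_one (x : (ℤ × ℤ) → unitInterval) : shiftI 1 x = x := rfl

lemma trAut_apply (v p : ℤ × ℤ) : trAut v p = v + p := rfl

lemma trAut_add (v w : ℤ × ℤ) : trAut (v + w) = trAut v * trAut w :=
  Equiv.addLeft_add v w

lemma trAut_zero : trAut (0 : ℤ × ℤ) = 1 := Equiv.addLeft_zero

lemma trAut_neg (v : ℤ × ℤ) : trAut (-v) = (trAut v)⁻¹ := by
  rw [eq_inv_iff_mul_eq_one, ← trAut_add, neg_add_cancel, trAut_zero]

lemma latAdj_iff_sub_mem_stdGen (v w : ℤ × ℤ) : LatAdj v w ↔ w - v ∈ stdGen := by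
  simp only [LatAdj, stdGen, sub_eq_iff_eq_add', Set.mem_insert_iff, Set.mem_singleton_iff]

lemma trAut_mem_latAut (v : ℤ × ℤ) : trAut v ∈ latAut := by
  intro p q
  simp only [latAdj_iff_sub_mem_stdGen, trAut_apply, add_sub_add_left_eq_sub]

lemma shiftI_mem_frSet {x : (ℤ × ℤ) → unitInterval} (hx : x ∈ FrSet)
    {g : Equiv.Perm (ℤ × ℤ)} (hg : g ∈ latAut) : shiftI g x ∈ FrSet := by
  intro h hh hne heq
  refine hx (g⁻¹ * h * g) (mul_mem (mul_mem (inv_mem hg) hh) hg) ?_ ?_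
  · rwa [Ne, mul_assoc, inv_mul_eq_one, eq_comm, mul_eq_right]
  · rw [shiftI_mul, shiftI_mul, heq, ← shiftI_mul, inv_mul_cancel, shiftI_one]

lemma eq_of_shiftI_eq {x : (ℤ × ℤ) → unitInterval} (hx : x ∈ FrSet)
    {g h : Equiv.Perm (ℤ × ℤ)} (hg : g ∈ latAut) (hh : h ∈ latAut)
    (heq : shiftI g x = shiftI h x) : g = h := by
  by_contra hne
  refine hx (h⁻¹ * g) (mul_mem (inv_mem hh) hg) ?_ ?_
  · rwa [Ne, inv_mul_eq_one, eq_comm]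
  · rw [shiftI_mul, heq, ← shiftI_mul, inv_mul_cancel, shiftI_one]

def frShift (g : Equiv.Perm (ℤ × ℤ)) (hg : g ∈ latAut) (x : FrPt) : FrPt :=
  ⟨shiftI g x.val, shiftI_mem_frSet x.prop hg⟩

lemma frShift_frShift (g h : Equiv.Perm (ℤ × ℤ)) (hg : g ∈ latAut) (hh : h ∈ latAut)
    (x : FrPt) :
    frShift g hg (frShift h hh x) = frShift (g * h) (mul_mem hg hh) x := rfl

lemma eq_of_mul_trAut_eq_trAut {γ : Equiv.Perm (ℤ × ℤ)} (hγ : γ 0 = 0) {v w : ℤ × ℤ}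
    (h : γ * trAut v = trAut w) : v = w := by
  have h0 := congrArg (fun g : Equiv.Perm (ℤ × ℤ) => g (-v)) h
  simp only [Equiv.Perm.mul_apply, trAut_apply, add_neg_cancel, hγ] at h0
  rw [eq_comm, add_neg_eq_zero] at h0
  exact h0.symm

/-- Evaluating `h` at `-v` shows that `δ` maps `w - v` to `a`; as an automorphism fixing `0`,
`δ` preserves `E`. -/
lemma latAdj_of_mul_trAut_eq {γ δ : Equiv.Perm (ℤ × ℤ)} (hγ : γ 0 = 0) (hδ : δ ∈ latAut)
    (hδ0 : δ 0 = 0) {a v w : ℤ × ℤ} (ha : a ∈ stdGen)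
    (h : δ * trAut w = trAut a * γ * trAut v) : LatAdj v w := by
  have hδa : δ (w - v) = a := by
    simpa [sub_eq_add_neg, add_comm w, trAut_apply, hγ] using
      congrArg (fun g : Equiv.Perm (ℤ × ℤ) => g (-v)) h
  rw [latAdj_iff_sub_mem_stdGen, ← sub_zero (w - v), ← latAdj_iff_sub_mem_stdGen, hδ,
    hδ0, hδa, latAdj_iff_sub_mem_stdGen, sub_zero]
  exact ha

section OrbitMap

variable (Γ : Subgroup (Equiv.Perm (ℤ × ℤ)))

def orbitMap (x : FrPt) (v : ℤ × ℤ) : Quotient (frSetoid Γ) :=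
  ⟦frShift (trAut v) (trAut_mem_latAut v) x⟧

lemma orbitMap_zero (x : FrPt) : orbitMap Γ x 0 = ⟦x⟧ :=
  Quotient.sound ⟨1, Γ.one_mem, by
    change shiftI (trAut 0) x.val = x.val
    rw [trAut_zero, shiftI_one]⟩

lemma orbitMap_add (x : FrPt) (a v : ℤ × ℤ) :
    orbitMap Γ x (a + v) =
      ⟦frShift (trAut a) (trAut_mem_latAut a) (frShift (trAut v) (trAut_mem_latAut v) x)⟧ := by
  simp only [orbitMap, frShift_frShift, trAut_add]

lemma mk_frShift_mem_Stilde (y : FrPt) {a : ℤ × ℤ} (ha : a ∈ stdGen) :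
    (⟦y⟧, ⟦frShift (trAut a) (trAut_mem_latAut a) y⟧) ∈ Stilde Γ :=
  ⟨y, a, ha, _, rfl, rfl⟩

variable {Γ}

lemma orbitMap_injective (hΓAut : Γ ≤ latAut) (hfix : ∀ γ ∈ Γ, γ (0 : ℤ × ℤ) = 0)
    (x : FrPt) : Function.Injective (orbitMap Γ x) := by
  intro v w h
  obtain ⟨γ, hγ, hγx⟩ := Quotient.exact h
  exact eq_of_mul_trAut_eq_trAut (hfix γ hγ) <| eq_of_shiftI_eq x.prop (mul_mem (hΓAut hγ) (trAut_mem_latAut v))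
      (trAut_mem_latAut w) hγx

lemma latAdj_iff_orbitMap_mem_Stilde (hΓAut : Γ ≤ latAut)
    (hfix : ∀ γ ∈ Γ, γ (0 : ℤ × ℤ) = 0) (x : FrPt) (v w : ℤ × ℤ) :
    LatAdj v w ↔ (orbitMap Γ x v, orbitMap Γ x w) ∈ Stilde Γ := by
  constructor
  · intro hvw
    rw [← sub_add_cancel w v, orbitMap_add]
    exact mk_frShift_mem_Stilde Γ _ ((latAdj_iff_sub_mem_stdGen v w).mp hvw)
  · rintro ⟨y, a, ha, _, hy, hay⟩
    obtain ⟨γ, hγ, hγx⟩ := Quotient.exact hy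
    obtain ⟨δ, hδ, hδx⟩ := Quotient.exact hay
    change shiftI δ (shiftI (trAut w) x.val) = shiftI (trAut a) y.val at hδx
    rw [← hγx, frShift, ← shiftI_mul, ← shiftI_mul, ← shiftI_mul] at hδx
    refine latAdj_of_mul_trAut_eq (hfix γ hγ) (hΓAut hδ) (hfix δ hδ) ha ?_
    exact eq_of_shiftI_eq x.prop (mul_mem (hΓAut hδ) (trAut_mem_latAut w))
      (mul_mem (mul_mem (trAut_mem_latAut a) (hΓAut hγ)) (trAut_mem_latAut v)) hδx

lemma exists_trAut_mul_eq_mul_trAut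
    (hconj : ∀ γ ∈ Γ, ∀ v : ℤ × ℤ, (trAut (γ v))⁻¹ * γ * trAut v ∈ Γ)
    {γ : Equiv.Perm (ℤ × ℤ)} (hγ : γ ∈ Γ) (a : ℤ × ℤ) :
    ∃ ρ ∈ Γ, ∃ u, trAut a * γ = ρ * trAut u := by
  refine ⟨trAut a * γ * trAut (γ⁻¹ (-a)), ?_, -γ⁻¹ (-a), ?_⟩
  · have h := hconj γ hγ (γ⁻¹ (-a))
    rwa [← Equiv.Perm.mul_apply, mul_inv_cancel, Equiv.Perm.one_apply, trAut_neg, inv_inv] at h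
  · rw [trAut_neg, mul_inv_cancel_right]

lemma exists_orbitMap_eq_of_mem_Stilde
    (hconj : ∀ γ ∈ Γ, ∀ v : ℤ × ℤ, (trAut (γ v))⁻¹ * γ * trAut v ∈ Γ)
    (x : FrPt) {v : ℤ × ℤ} {z : Quotient (frSetoid Γ)}
    (h : (orbitMap Γ x v, z) ∈ Stilde Γ) : ∃ u, orbitMap Γ x u = z := by
  obtain ⟨y, a, _, _, hy, rfl⟩ := h
  obtain ⟨γ, hγ, hγx⟩ := Quotient.exact hy
  obtain ⟨ρ, hρ, u, hau⟩ := exists_trAut_mul_eq_mul_trAut hconj hγ a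
  refine ⟨u + v, Quotient.sound ⟨ρ, hρ, ?_⟩⟩
  change shiftI ρ (shiftI (trAut (u + v)) x.val) = shiftI (trAut a) y.val
  rw [← hγx, frShift, trAut_add, ← shiftI_mul, ← shiftI_mul, ← shiftI_mul, ← mul_assoc, ← hau]

lemma exists_orbitMap_eq_of_conn
    (hconj : ∀ γ ∈ Γ, ∀ v : ℤ × ℤ, (trAut (γ v))⁻¹ * γ * trAut v ∈ Γ)
    (x : FrPt) {z : Quotient (frSetoid Γ)} (h : Conn (Stilde Γ) ⟦x⟧ z) :
    ∃ v, orbitMap Γ x v = z := by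
  induction h with
  | refl => exact ⟨0, orbitMap_zero Γ x⟩
  | tail _ hedge ih =>
    obtain ⟨v, rfl⟩ := ih
    exact exists_orbitMap_eq_of_mem_Stilde hconj x hedge

end OrbitMap

end Paper

/-- For a subgroup `Γ` of `Aut(Cay(ℤ², E))` fixing `0` and closed under conjugation
by translations, for every `x` in the free part the map `v ↦ [⟨v⟩ · x]` is a graph
isomorphism from `Cay(ℤ², E)` onto the connected component of `[x]` in `S̃_Γ`; in
particular, `S̃_Γ` is locally a square lattice. -/
theorem Stilde_locally_square_lattice (Γ : Subgroup (Equiv.Perm (ℤ × ℤ)))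
    (hΓAut : Γ ≤ latAut)
    (hfix : ∀ γ ∈ Γ, γ (0 : ℤ × ℤ) = 0)
    (hconj : ∀ γ ∈ Γ, ∀ v : ℤ × ℤ, (trAut (γ v))⁻¹ * γ * trAut v ∈ Γ) :
    (∀ x : FrPt, ∃ φ : ℤ × ℤ → Quotient (frSetoid Γ),
      (∀ v : ℤ × ℤ, ∃ hv : shiftI (trAut v) x.val ∈ FrSet,
        φ v = Quotient.mk (frSetoid Γ) ⟨shiftI (trAut v) x.val, hv⟩) ∧
      Function.Injective φ ∧
      φ 0 = Quotient.mk (frSetoid Γ) x ∧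
      (∀ v w : ℤ × ℤ, LatAdj v w ↔ (φ v, φ w) ∈ Stilde Γ) ∧
      ∀ y, Conn (Stilde Γ) (Quotient.mk (frSetoid Γ) x) y → ∃ v, φ v = y) ∧
    LocallySquareLattice (Stilde Γ) := by
  refine ⟨fun x => ⟨orbitMap Γ x, fun v => ⟨_, rfl⟩, orbitMap_injective hΓAut hfix x,
    orbitMap_zero Γ x, latAdj_iff_orbitMap_mem_Stilde hΓAut hfix x,
    fun _ => exists_orbitMap_eq_of_conn hconj x⟩, ?_⟩
  rintro ⟨x⟩
  exact ⟨orbitMap Γ x, orbitMap_injective hΓAut hfix x, orbitMap_zero Γ x,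
    latAdj_iff_orbitMap_mem_Stilde hΓAut hfix x, fun _ => exists_orbitMap_eq_of_conn hconj x⟩
end

section
/- Let E be a Borel equivalence relation on a Polish space X. Then there is a Borel function f : X → 2^ω with x E y ⟺ f(x) = f(y) for all x, y ∈ X (i.e., E is Borel reducible to equality on 2^ω) if and only if the complement of E in X × X is a union of countably many Borel rectangles A_i × B_i with (A_i × B_i) ∩ E = ∅ for every i. -/
/-!
If `f` is a Borel reduction, the complement of `E` is covered by the rectangles
`{f · n = b} × {f · n = !b}`. Conversely, for a Borel rectangle `A × B` avoiding `E` the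
saturations `E.preimage A` and `E.preimage B` are disjoint analytic sets. Separating them by a
Borel set, then separating the saturation of that set from `E.preimage B` again, and so on, gives an increasing sequence
of Borel sets whose union `C` is `E`-invariant, contains `A` and misses `B`. The indicator
functions of these invariant sets, one per rectangle, form the reduction to `ℕ → Bool`.
-/

open Set MeasureTheory

namespace SetRel

variable {X : Type*} {E : SetRel X X} {s t : Set X}

lemma mem_iff_of_preimage_subset [E.IsSymm] (hs : E.preimage s ⊆ s) {x y : X}
    (hxy : (x, y) ∈ E) : x ∈ s ↔ y ∈ s :=
  ⟨fun hx => hs ⟨x, hx, E.symm hxy⟩, fun hy => hs ⟨y, hy, hxy⟩⟩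

lemma preimage_preimage_subset [E.IsTrans] (s : Set X) :
    E.preimage (E.preimage s) ⊆ E.preimage s := by
  rw [← preimage_comp]
  exact preimage_subset_preimage_left comp_subset_self

lemma disjoint_preimage_of_disjoint [E.IsSymm] (hst : Disjoint s t) (ht : E.preimage t ⊆ t) :
    Disjoint (E.preimage s) t :=
  disjoint_left.2 fun _ ⟨_, hy, hxy⟩ hx => disjoint_left.1 hst hy (ht ⟨_, hx, E.symm hxy⟩)

lemma disjoint_preimage_preimage [E.IsSymm] [E.IsTrans] (hst : Disjoint (s ×ˢ t) E) :
    Disjoint (E.preimage s) (E.preimage t) :=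
  disjoint_left.2 fun _ ⟨_, ha, hxa⟩ ⟨_, hb, hxb⟩ =>
    disjoint_left.1 hst (mk_mem_prod ha hb) (E.trans (E.symm hxa) hxb)

theorem exists_measurable_reduction_of_compl_subset_iUnion [MeasurableSpace X] [E.IsSymm]
    {ι : Type*} [Countable ι] {C : ι → Set X} (hC : ∀ i, MeasurableSet (C i))
    (hCE : ∀ i, E.preimage (C i) ⊆ C i) (hsep : Eᶜ ⊆ ⋃ i, C i ×ˢ (C i)ᶜ) :
    ∃ f : X → ι → Bool, Measurable f ∧ ∀ x y, (x, y) ∈ E ↔ f x = f y := by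
  classical
  refine ⟨fun x i => decide (x ∈ C i),
    measurable_pi_lambda _ fun i => measurable_to_bool (by simpa [Set.preimage] using hC i),
    fun x y => ⟨fun hxy => ?_, fun hfxy => by_contra fun hxy => ?_⟩⟩
  · exact funext fun i => decide_eq_decide.2 (mem_iff_of_preimage_subset (hCE i) hxy)
  · obtain ⟨i, hx, hy⟩ := mem_iUnion.1 (hsep hxy)
    exact hy (by simpa [hx] using congr_fun hfxy i)

variable [TopologicalSpace X] [PolishSpace X] [MeasurableSpace X] [BorelSpace X]

theorem analyticSet_preimage (hE : MeasurableSet E) (hs : MeasurableSet s) :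
    AnalyticSet (E.preimage s) := by
  have : E.preimage s = Prod.fst '' (E ∩ Prod.snd ⁻¹' s) := by
    ext x
    simp [and_comm]
  rw [this]
  exact (hE.inter (measurable_snd hs)).analyticSet.image_of_continuous continuous_fst

theorem exists_measurableSet_invariant_separating [E.IsSymm] (hE : MeasurableSet E)
    (hs : AnalyticSet s) (ht : AnalyticSet t) (hst : Disjoint s t) (ht_inv : E.preimage t ⊆ t) :
    ∃ C, MeasurableSet C ∧ s ⊆ C ∧ Disjoint C t ∧ E.preimage C ⊆ C := by
  let Good := {c : Set X // MeasurableSet c ∧ Disjoint c t}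
  have step (c : Good) : ∃ c' : Good, E.preimage c.1 ⊆ c'.1 := by
    obtain ⟨u, hcu, htu, hu⟩ := (analyticSet_preimage hE c.2.1).measurablySeparable ht
      (disjoint_preimage_of_disjoint c.2.2 ht_inv)
    exact ⟨⟨u, hu, htu.symm⟩, hcu⟩
  choose next hnext using step
  obtain ⟨C₀, hsC₀, htC₀, hC₀⟩ := hs.measurablySeparable ht hst
  let seq (n : ℕ) : Good := next^[n] ⟨C₀, hC₀, htC₀.symm⟩
  refine ⟨⋃ n, (seq n).1, .iUnion fun n => (seq n).2.1, subset_iUnion_of_subset 0 hsC₀,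
    disjoint_iUnion_left.2 fun n => (seq n).2.2, ?_⟩
  rw [preimage_iUnion]
  refine iUnion_subset fun n => subset_iUnion_of_subset (n + 1) ?_
  simpa only [seq, Function.iterate_succ_apply'] using hnext (seq n)

theorem exists_measurableSet_invariant_separating_prod [E.IsRefl] [E.IsSymm] [E.IsTrans]
    (hE : MeasurableSet E) (hs : MeasurableSet s) (ht : MeasurableSet t)
    (hst : Disjoint (s ×ˢ t) E) :
    ∃ C, MeasurableSet C ∧ s ⊆ C ∧ Disjoint C t ∧ E.preimage C ⊆ C := by
  obtain ⟨C, hC, hsC, htC, hCE⟩ := exists_measurableSet_invariant_separating hE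
    (analyticSet_preimage hE hs) (analyticSet_preimage hE ht) (disjoint_preimage_preimage hst)
    (preimage_preimage_subset t)
  exact ⟨C, hC, (self_subset_preimage s).trans hsC,
    htC.mono_right (self_subset_preimage t), hCE⟩

end SetRel

theorem compl_setOf_eq_eq_iUnion_prod {X ι : Type*} (f : X → ι → Bool) :
    {p : X × X | f p.1 = f p.2}ᶜ =
      ⋃ k : Bool × ι, {x | f x k.2 = k.1} ×ˢ {x | f x k.2 = !k.1} := by
  ext ⟨x, y⟩
  simp only [mem_compl_iff, mem_ofPred_eq, funext_iff, not_forall, mem_iUnion, Prod.exists]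
  constructor
  · rintro ⟨i, hi⟩
    exact ⟨f x i, i, rfl, Bool.eq_not_iff.2 (Ne.symm hi)⟩
  · rintro ⟨b, i, hx, hy⟩
    exact ⟨i, hx ▸ (Bool.eq_not_iff.1 hy).symm⟩

theorem exists_rectangles_of_measurable_reduction {X : Type*} [MeasurableSpace X]
    {E : Set (X × X)} {f : X → ℕ → Bool} (hf : Measurable f)
    (hfE : ∀ x y, (x, y) ∈ E ↔ f x = f y) :
    ∃ A B : ℕ → Set X,
      (∀ i, MeasurableSet (A i)) ∧ (∀ i, MeasurableSet (B i)) ∧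
      (∀ i, (A i ×ˢ B i) ∩ E = ∅) ∧
      Eᶜ = ⋃ i, A i ×ˢ B i := by
  let e := Equiv.boolProdNatEquivNat.symm
  have hcover : Eᶜ = ⋃ i, {x | f x (e i).2 = (e i).1} ×ˢ {x | f x (e i).2 = !(e i).1} := by
    rw [show E = {p | f p.1 = f p.2} from ext fun p => hfE p.1 p.2,
      compl_setOf_eq_eq_iUnion_prod]
    exact (e.surjective.iUnion_comp _).symm
  refine ⟨_, _, fun i => hf.eval (measurableSet_singleton _),
    fun i => hf.eval (measurableSet_singleton _), fun i => ?_, hcover⟩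
  rw [← disjoint_iff_inter_eq_empty, ← subset_compl_iff_disjoint_right, hcover]
  exact subset_iUnion_of_subset i subset_rfl

/-- A Borel equivalence relation `E` on a Polish space `X` is Borel reducible to
equality on `2^ω` iff the complement of `E` is a countable union of Borel
rectangles `A_i × B_i` avoiding `E`. -/
theorem smooth_iff_countable_union_of_rectangles
    {X : Type*} [TopologicalSpace X] [PolishSpace X]
    [MeasurableSpace X] [BorelSpace X]
    (E : Set (X × X)) (hEBorel : MeasurableSet E)
    (hEequiv : Equivalence fun x y => (x, y) ∈ E) :
    (∃ f : X → (ℕ → Bool), Measurable f ∧ ∀ x y, (x, y) ∈ E ↔ f x = f y) ↔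
    ∃ A B : ℕ → Set X,
      (∀ i, MeasurableSet (A i)) ∧ (∀ i, MeasurableSet (B i)) ∧
      (∀ i, (A i ×ˢ B i) ∩ E = ∅) ∧
      Eᶜ = ⋃ i, A i ×ˢ B i := by
  have : SetRel.IsRefl E := ⟨hEequiv.refl⟩
  have : SetRel.IsSymm E := ⟨fun _ _ => hEequiv.symm⟩
  have : SetRel.IsTrans E := ⟨fun _ _ _ => hEequiv.trans⟩
  constructor
  · rintro ⟨f, hf, hfE⟩
    exact exists_rectangles_of_measurable_reduction hf hfE
  · rintro ⟨A, B, hA, hB, hABE, hcover⟩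
    choose C hC hAC hCB hCE using fun i =>
      SetRel.exists_measurableSet_invariant_separating_prod hEBorel (hA i) (hB i)
        (disjoint_iff_inter_eq_empty.2 (hABE i))
    refine SetRel.exists_measurable_reduction_of_compl_subset_iUnion hC hCE ?_
    rw [hcover]
    exact iUnion_mono fun i => prod_mono (hAC i) (hCB i).subset_compl_left
end

section
/- Let G be an acyclic graph and let f be a function generating G. Then f ∩ G = {(x, f(x)) : (x, f(x)) ∈ G} is consistent: there are no two edges e, e′ ∈ f ∩ G with e I e′. -/
namespace Paper

variable {X : Type*}

/-- `G` is acyclic: there is no simple cycle (of length at least 3). -/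
def Acyclic (G : Set (X × X)) : Prop :=
  ¬ ∃ (x : X) (p : List X), 2 ≤ p.length ∧ (x :: p).Nodup ∧
      ((x :: p).Chain' fun a b => (a, b) ∈ G) ∧
      ((x :: p).getLast (List.cons_ne_nil x p), x) ∈ G

/-- `e P y`: `y` and `e₀` are in the same component and the (unique) simple path
from `e₀` to `y` goes through `e₁`. -/
def PointsTo (G : Set (X × X)) (e : X × X) (y : X) : Prop :=
  ∃ p : List X, IsPathL G p ∧ p.head? = some e.1 ∧ p.getLast? = some y ∧ e.2 ∈ p

/-- `e I e'`. -/
def Interferes (G : Set (X × X)) (e e' : X × X) : Prop :=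
  e ≠ e' ∧ Conn G e.1 e'.1 ∧ ¬ PointsTo G e e'.1 ∧ ¬ PointsTo G e' e.1

/-- A set of directed edges is consistent if no two of its members satisfy `I`. -/
def Consistent (G : Set (X × X)) (A : Set (X × X)) : Prop :=
  ∀ e ∈ A, ∀ e' ∈ A, ¬ Interferes G e e'

/-- `e ≺ e'`: `e P e'₀` but not `e' P e₀`. -/
def EdgePrec (G : Set (X × X)) (e e' : X × X) : Prop :=
  PointsTo G e e'.1 ∧ ¬ PointsTo G e' e.1

/-- `A` is downward closed under `≺`. -/
def PrecClosed (G : Set (X × X)) (A : Set (X × X)) : Prop :=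
  ∀ e e', EdgePrec G e e' → e' ∈ A → e ∈ A

end Paper

open Paper

/-! A function walks a simple path of a graph it generates backwards as soon as it maps the
second vertex to the first: the only alternative at an edge `(u, v)`, namely `v = f u`, would
revisit a vertex. So either `f` sends the start of the path one step along it, or `f` sends the
end one step back along it; either way one of the two edges points to the other end. -/

namespace Paper

variable {X : Type*} {G : Set (X × X)} {f : X → X}

theorem exists_isPathL_of_conn (hsymm : ∀ x y, (x, y) ∈ G → (y, x) ∈ G) {x y : X}
    (h : Conn G x y) : ∃ p, IsPathL G p ∧ p.head? = some x ∧ p.getLast? = some y := by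
  classical
  let H := SimpleGraph.fromEdgeSet (Sym2.fromRel (r := fun u v => (u, v) ∈ G) ⟨hsymm⟩)
  have hreach : H.Reachable x y := by
    rwa [SimpleGraph.reachable_fromEdgeSet_fromRel_eq_reflTransGen]
  obtain ⟨w⟩ := hreach
  let p := w.toPath.1
  refine ⟨p.support, ⟨p.support_ne_nil, w.toPath.2.support_nodup, ?_⟩, ?_, ?_⟩
  · exact p.isChain_adj_support.imp fun u v huv => (SimpleGraph.fromEdgeSet_adj _).1 huv |>.1
  · rw [List.head?_eq_some_head p.support_ne_nil, p.head_support]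
  · rw [List.getLast?_eq_some_getLast p.support_ne_nil, p.getLast_support]

theorem IsPathL.reverse (hsymm : ∀ x y, (x, y) ∈ G → (y, x) ∈ G) {p : List X}
    (hp : IsPathL G p) : IsPathL G p.reverse := by
  obtain ⟨hne, hnd, hch⟩ := hp
  exact ⟨List.reverse_ne_nil_iff.2 hne, List.nodup_reverse.2 hnd,
    List.isChain_reverse.2 (hch.imp fun u v huv => hsymm u v huv)⟩

theorem apply_getLast_mem_of_apply_eq (hgen : G ⊆ {p | p.2 = f p.1 ∨ p.1 = f p.2}) :
    ∀ {a b : X} {l : List X}, (a :: b :: l).Nodup →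
      (a :: b :: l).IsChain (fun u v => (u, v) ∈ G) → f b = a →
      f ((a :: b :: l).getLast (List.cons_ne_nil _ _)) ∈ a :: b :: l
  | a, b, [], _, _, hfb => by simp [hfb]
  | a, b, c :: l, hnd, hch, hfb => by
    have hfc : f c = b := by
      rcases hgen (List.isChain_cons_cons.1 (List.isChain_cons_cons.1 hch).2).1 with h | h
      · have hca : c = a := h.trans hfb
        simp [hca] at hnd
      · exact h.symm
    have ih := apply_getLast_mem_of_apply_eq hgen hnd.of_cons hch.tail hfc
    rw [List.getLast_cons (List.cons_ne_nil _ _)]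
    exact List.mem_cons_of_mem a ih

theorem pointsTo_or_pointsTo_of_isPathL (hsymm : ∀ x y, (x, y) ∈ G → (y, x) ∈ G)
    (hgen : G ⊆ {p | p.2 = f p.1 ∨ p.1 = f p.2}) {p : List X} (hp : IsPathL G p) {x y : X}
    (hx : p.head? = some x) (hy : p.getLast? = some y) (hxy : x ≠ y) :
    PointsTo G (x, f x) y ∨ PointsTo G (y, f y) x := by
  obtain ⟨-, hnd, hch⟩ := hp
  match p, hnd, hch, hx, hy with
  | [a], _, _, hx, hy =>
    simp only [List.head?_cons, List.getLast?_singleton, Option.some.injEq] at hx hy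
    exact absurd (hx.symm.trans hy) hxy
  | a :: b :: l, hnd, hch, hx, hy =>
    obtain rfl : a = x := Option.some_injective _ hx
    have hp : IsPathL G (a :: b :: l) := ⟨List.cons_ne_nil _ _, hnd, hch⟩
    rcases hgen (List.isChain_cons_cons.1 hch).1 with hb | hb
    · exact .inl ⟨_, hp, hx, hy, by simp [← hb]⟩
    · have hlast : (a :: b :: l).getLast (List.cons_ne_nil _ _) = y :=
        Option.some_injective _ ((List.getLast?_eq_some_getLast _).symm.trans hy)
      have hfy := apply_getLast_mem_of_apply_eq hgen hnd hch hb.symm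
      rw [hlast] at hfy
      refine .inr ⟨_, hp.reverse hsymm, ?_, ?_, List.mem_reverse.2 hfy⟩
      · rw [List.head?_reverse, hy]
      · rw [List.getLast?_reverse, hx]

end Paper

theorem generating_function_consistent_general {X : Type*}
    (G : Set (X × X)) (hG : IsGraph G)
    (f : X → X) (hgen : G ⊆ {p | p.2 = f p.1 ∨ p.1 = f p.2}) :
    Consistent G {p | p ∈ G ∧ p.2 = f p.1} := by
  rintro ⟨x, x'⟩ ⟨-, hx' : x' = f x⟩ ⟨y, y'⟩ ⟨-, hy' : y' = f y⟩ ⟨hne, hconn, hxy, hyx⟩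
  subst hx' hy'
  obtain ⟨p, hp, hx, hy⟩ := exists_isPathL_of_conn hG.1 hconn
  have hxy_ne : x ≠ y := by rintro rfl; exact hne rfl
  exact (pointsTo_or_pointsTo_of_isPathL hG.1 hgen hp hx hy hxy_ne).elim hxy hyx

/-- If `G` is an acyclic graph generated by a function `f`, then
`f ∩ G = {(x, f x) : (x, f x) ∈ G}` is consistent. -/
theorem generating_function_consistent {X : Type*}
    (G : Set (X × X)) (hG : IsGraph G) (hacyc : Acyclic G)
    (f : X → X) (hgen : G ⊆ {p | p.2 = f p.1 ∨ p.1 = f p.2}) :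
    Consistent G {p | p ∈ G ∧ p.2 = f p.1} :=
  generating_function_consistent_general G hG f hgen
end

section
/- Let G be an acyclic Borel graph on a standard Borel space, and suppose there is a sequence ⟨A_i : i ∈ ℕ⟩ of Borel sets of directed edges of G, each consistent and downward closed under ≺, with G = ⋃_i (A_i ∪ (−A_i)). Then G is generated by a single Borel function. -/
/-!
Consistency makes each `A i` the graph of a partial Borel function, so sending `x` along the
unique `A i`-edge out of `x` for the least `i` for which there is one gives a Borel function `F`.
It generates `G`: if `(x, y) ∈ A i` but `F x ≠ y`, then `(x, F x) ∈ A j` for the least index `j`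
at `x`, and `(y, x) ≺ (x, F x)`, so `(y, x) ∈ A j` by downward closure. Applying the same
reasoning at `y`, either `F y = x` or `(x, y)` lies in `A k` for the least index `k` at `y`;
minimality at both ends forces `j = k`, and then `A j` has two edges out of `x`.
-/

namespace Paper

variable {X : Type*} {G A : Set (X × X)}

lemma not_pointsTo_self {x z : X} (hzx : z ≠ x) : ¬ PointsTo G (x, z) x := by
  rintro ⟨p, ⟨hne, hnd, -⟩, hhead, hlast, hz⟩
  obtain ⟨w, rfl⟩ := (hnd.head_eq_getLast_iff hne).1 <| by
    rw [← Option.some_inj, ← List.head?_eq_some_head, ← List.getLast?_eq_some_getLast,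
      hhead, hlast]
  simp_all

lemma IsPathL.eq_pair_of_adj (hG : IsGraph G) (hacyc : Acyclic G) {x y : X}
    (hxy : (x, y) ∈ G) {p : List X} (hp : IsPathL G p)
    (hhead : p.head? = some x) (hlast : p.getLast? = some y) : p = [x, y] := by
  obtain ⟨-, hnd, hch⟩ := hp
  match p, hhead, hlast with
  | [a], hhead, hlast =>
    obtain ⟨rfl, rfl⟩ : a = x ∧ a = y := by simp_all
    exact absurd hxy (hG.2 a)
  | [a, b], hhead, hlast => simp_all
  | a :: b :: c :: l, hhead, hlast =>
    -- a longer path closes up with the edge `(y, x)` into a cycle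
    refine absurd ⟨a, b :: c :: l, by simp, hnd, hch, ?_⟩ hacyc
    obtain rfl : a = x := by simpa using hhead
    rw [List.getLast?_eq_some_getLast (List.cons_ne_nil _ _), Option.some_inj] at hlast
    exact hlast ▸ hG.1 _ _ hxy

lemma not_pointsTo_of_adj (hG : IsGraph G) (hacyc : Acyclic G) {x y z : X}
    (hxy : (x, y) ∈ G) (hzx : z ≠ x) (hzy : z ≠ y) : ¬ PointsTo G (x, z) y := by
  rintro ⟨p, hp, hhead, hlast, hz⟩
  rw [hp.eq_pair_of_adj hG hacyc hxy hhead hlast] at hz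
  simp_all

lemma Consistent.eq_of_mem (hG : IsGraph G) (hAG : A ⊆ G) (hA : Consistent G A)
    {x y z : X} (hy : (x, y) ∈ A) (hz : (x, z) ∈ A) : y = z := by
  by_contra hne
  have hyx : y ≠ x := by rintro rfl; exact hG.2 y (hAG hy)
  have hzx : z ≠ x := by rintro rfl; exact hG.2 z (hAG hz)
  exact hA _ hy _ hz ⟨by simp [hne], .refl, not_pointsTo_self hyx, not_pointsTo_self hzx⟩

lemma PrecClosed.mem_of_adj (hG : IsGraph G) (hacyc : Acyclic G) (hAG : A ⊆ G)
    (hA : PrecClosed G A) {x y z : X} (hxz : (x, z) ∈ A) (hyx : (y, x) ∈ G) (hzy : z ≠ y) :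
    (y, x) ∈ A := by
  have hzx : z ≠ x := by rintro rfl; exact hG.2 z (hAG hxz)
  have hyx' : y ≠ x := by rintro rfl; exact hG.2 y hyx
  refine hA (y, x) (x, z) ⟨⟨[y, x], ⟨by simp, by simp [hyx'], List.isChain_pair.2 hyx⟩,
    rfl, rfl, by simp⟩, not_pointsTo_of_adj hG hacyc (hG.1 _ _ hyx) hzx hzy⟩ hxz

lemma eq_or_eq_of_least_index (hG : IsGraph G) (hacyc : Acyclic G) {A : ℕ → Set (X × X)}
    (hAG : ∀ i, A i ⊆ G) (hAcons : ∀ i, Consistent G (A i))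
    (hAclosed : ∀ i, PrecClosed G (A i)) {F : X → X} {ι : X → ℕ}
    (hF : ∀ i x y, (x, y) ∈ A i → (x, F x) ∈ A (ι x) ∧ ι x ≤ i)
    {i : ℕ} {x y : X} (hxy : (x, y) ∈ A i) : y = F x ∨ x = F y := by
  obtain ⟨hx, -⟩ := hF i x y hxy
  by_cases hFx : F x = y
  · exact .inl hFx.symm
  have hyx := (hAclosed _).mem_of_adj hG hacyc (hAG _) hx (hG.1 _ _ (hAG i hxy)) hFx
  obtain ⟨hy, hιy⟩ := hF _ y x hyx
  by_cases hFy : F y = x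
  · exact .inr hFy.symm
  have hxy' := (hAclosed _).mem_of_adj hG hacyc (hAG _) hy (hAG i hxy) hFy
  have hιx := (hF _ x y hxy').2
  rw [← le_antisymm hιx hιy] at hxy'
  exact absurd ((hAcons _).eq_of_mem hG (hAG _) hx hxy') hFx

end Paper

section Uniformization

variable {X Y : Type*} [MeasurableSpace X] [StandardBorelSpace X]
  [MeasurableSpace Y] [StandardBorelSpace Y]

lemma MeasurableSet.exists_measurable_of_functional [Nonempty Y] {S : Set (X × Y)}
    (hS : MeasurableSet S) (hfun : ∀ x y z, (x, y) ∈ S → (x, z) ∈ S → y = z) :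
    ∃ f : X → Y, Measurable f ∧ ∀ e ∈ S, f e.1 = e.2 := by
  have := hS.standardBorel
  have hinj : Function.Injective fun e : S => e.1.1 := by
    rintro ⟨⟨x, y⟩, hy⟩ ⟨⟨x', z⟩, hz⟩ (rfl : x = x')
    simp [hfun x y z hy hz]
  obtain ⟨f, hf, hfe⟩ := ((measurable_fst.comp measurable_subtype_coe).measurableEmbedding
    hinj).exists_measurable_extend (measurable_snd.comp measurable_subtype_coe)
    fun _ => inferInstance
  exact ⟨f, hf, fun e he => congrFun hfe ⟨e, he⟩⟩

lemma MeasurableSet.image_fst_of_functional {S : Set (X × Y)} (hS : MeasurableSet S)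
    (hfun : ∀ x y z, (x, y) ∈ S → (x, z) ∈ S → y = z) : MeasurableSet (Prod.fst '' S) :=
  hS.image_of_measurable_injOn measurable_fst <| by
    rintro ⟨x, y⟩ hy ⟨_, z⟩ hz (rfl : x = _)
    simp [hfun x y z hy hz]

lemma exists_measurable_least_index_selector [Nonempty Y] (S : ℕ → Set (X × Y))
    (hS : ∀ i, MeasurableSet (S i)) (hfun : ∀ i x y z, (x, y) ∈ S i → (x, z) ∈ S i → y = z) :
    ∃ F : X → Y, ∃ ι : X → ℕ, Measurable F ∧
      ∀ i x y, (x, y) ∈ S i → (x, F x) ∈ S (ι x) ∧ ι x ≤ i := by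
  classical
  choose f hfmeas hf using fun i => (hS i).exists_measurable_of_functional (hfun i)
  set D : ℕ → Set X := fun i => Prod.fst '' S i
  have hDmeas i : MeasurableSet (D i) := (hS i).image_fst_of_functional (hfun i)
  -- the complement of `⋃ j, D j` only makes `Nat.find` total; there `F` is the junk value `f 0`
  have hD x : ∃ i, x ∈ D i ∪ (⋃ j, D j)ᶜ :=
    (em (x ∈ ⋃ j, D j)).elim (fun hx => (Set.mem_iUnion.1 hx).imp fun _ => .inl)
      fun hx => ⟨0, .inr hx⟩
  refine ⟨fun x => f (Nat.find (hD x)) x, fun x => Nat.find (hD x),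
    Measurable.find (p := fun i x => x ∈ D i ∪ (⋃ j, D j)ᶜ) hfmeas
      (fun i => (hDmeas i).union (MeasurableSet.iUnion hDmeas).compl) hD,
    fun i x y hxy => ?_⟩
  have hxD : x ∈ D i := ⟨(x, y), hxy, rfl⟩
  refine ⟨?_, Nat.find_le (.inl hxD)⟩
  obtain ⟨⟨x', y'⟩, hx'y', rfl : x' = x⟩ := (Nat.find_spec (hD x)).resolve_right
    (not_not.2 (Set.mem_iUnion_of_mem i hxD))
  simp only [show f _ x' = y' from hf _ _ hx'y']
  exact hx'y'

end Uniformization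

open Paper

theorem generated_by_single_function_of_cover_general
    {X : Type*} [MeasurableSpace X] [StandardBorelSpace X]
    (G : Set (X × X)) (hG : IsGraph G)
    (hacyc : Acyclic G)
    (A : ℕ → Set (X × X)) (hABorel : ∀ i, MeasurableSet (A i))
    (hAsub : ∀ i, A i ⊆ G)
    (hAcons : ∀ i, Consistent G (A i)) (hAclosed : ∀ i, PrecClosed G (A i))
    (hcover : G = ⋃ i, (A i ∪ {e | neg e ∈ A i})) :
    ∃ f : X → X, Measurable f ∧ G ⊆ {p | p.2 = f p.1 ∨ p.1 = f p.2} := by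
  rcases isEmpty_or_nonempty X with hX | hX
  · exact ⟨id, measurable_id, fun p _ => isEmptyElim p.1⟩
  obtain ⟨F, ι, hFmeas, hF⟩ := exists_measurable_least_index_selector A hABorel
    fun i _ _ _ => (hAcons i).eq_of_mem hG (hAsub i)
  refine ⟨F, hFmeas, fun ⟨x, y⟩ hxy => ?_⟩
  rw [hcover] at hxy
  obtain ⟨i, hi | hi⟩ := Set.mem_iUnion.1 hxy
  · exact eq_or_eq_of_least_index hG hacyc hAsub hAcons hAclosed hF hi
  · exact (eq_or_eq_of_least_index hG hacyc hAsub hAcons hAclosed hF hi).symm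

/-- If an acyclic Borel graph `G` is covered as `G = ⋃ i, (A i ∪ (-A i))` by Borel
consistent `≺`-downward-closed sets of directed edges, then `G` is generated by a
single Borel function. -/
theorem generated_by_single_function_of_cover
    {X : Type*} [MeasurableSpace X] [StandardBorelSpace X]
    (G : Set (X × X)) (hG : IsGraph G) (hGBorel : MeasurableSet G)
    (hacyc : Acyclic G)
    (A : ℕ → Set (X × X)) (hABorel : ∀ i, MeasurableSet (A i))
    (hAsub : ∀ i, A i ⊆ G)
    (hAcons : ∀ i, Consistent G (A i)) (hAclosed : ∀ i, PrecClosed G (A i))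
    (hcover : G = ⋃ i, (A i ∪ {e | neg e ∈ A i})) :
    ∃ f : X → X, Measurable f ∧ G ⊆ {p | p.2 = f p.1 ∨ p.1 = f p.2} :=
  generated_by_single_function_of_cover_general G hG hacyc A hABorel hAsub hAcons hAclosed hcover
end

section
/- Let G be an acyclic graph and let X, Y be sets of directed edges of G that are each consistent and downward closed under ≺. Then Y ∪ (X ∖ (−Y)) is consistent and downward closed under ≺. -/
/-!
In a forest, deleting the edge `e = (a, b)` splits the component of `a` into an `a`-side and a
`b`-side, and `e P y` says that `y` lies on the `b`-side. Hence `-e P y` iff not `e P y`, and an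
edge other than `e` that starts on the `a`-side ends there too. These two facts give
`f ≺ e → -e ≺ -f` and `e I e' → -e' ≺ e`, and downward closure of `T` then excludes both
an interference inside `T ∪ (S ∖ -T)` and an `f ≺ e` with `e ∈ S ∖ -T` and `-f ∈ T`.
-/

namespace SimpleGraph.IsAcyclic

variable {V : Type*} {H : SimpleGraph V}

theorem mem_support_iff_notMem_support (hH : H.IsAcyclic) {a b y : V} (hab : H.Adj a b)
    {p : H.Walk a y} {q : H.Walk b y} (hp : p.IsPath) (hq : q.IsPath) :
    b ∈ p.support ↔ a ∉ q.support := by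
  constructor
  · intro hb
    simpa using hH.ne_mem_support_of_support_of_adj_of_isPath hp.reverse hq.reverse hab
      (by simpa using hb)
  · intro ha
    simpa using hH.mem_support_of_ne_mem_support_of_adj_of_isPath hp.reverse hq.reverse hab
      (by simpa using ha)

theorem eq_of_adj_of_notMem_of_mem (hH : H.IsAcyclic) {a b c d : V} (hab : H.Adj a b)
    (hcd : H.Adj c d) {p : H.Walk a c} {q : H.Walk a d} (hp : p.IsPath) (hq : q.IsPath)
    (hbp : b ∉ p.support) (hbq : b ∈ q.support) : a = c ∧ b = d := by
  obtain rfl : b = d := by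
    by_cases hc : c ∈ q.support
    · rw [hH.path_concat hp hq hcd hc, Walk.support_concat] at hbq
      simpa [hbp] using hbq
    · obtain ⟨p₀, p₁, hp₀, -, rfl⟩ := hp.mem_support_iff_exists_append.mp
        (hH.mem_support_of_ne_mem_support_of_adj_of_isPath hp hq hcd hc)
      obtain rfl : q = p₀ :=
        congrArg Subtype.val ((hH.subsingleton_path _ _).elim ⟨q, hq⟩ ⟨p₀, hp₀⟩)
      exact absurd (Walk.support_subset_support_append_left _ _ hbq) hbp
  have := hH.eq_penultimate_of_adj_end (hp.concat hbp hcd) hab.symm (Walk.start_mem_support _)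
  exact ⟨by simpa using this, rfl⟩

end SimpleGraph.IsAcyclic

namespace Paper

variable {X : Type*} {G : Set (X × X)}

def IsGraph.toSimpleGraph (hG : IsGraph G) : SimpleGraph X where
  Adj x y := (x, y) ∈ G
  symm := ⟨hG.1⟩
  loopless := ⟨hG.2⟩

theorem IsGraph.conn_iff_reachable (hG : IsGraph G) {x y : X} :
    Conn G x y ↔ hG.toSimpleGraph.Reachable x y :=
  (SimpleGraph.reachable_iff_reflTransGen (G := hG.toSimpleGraph) x y).symm

theorem Acyclic.isAcyclic (hG : IsGraph G) (hacyc : Acyclic G) :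
    hG.toSimpleGraph.IsAcyclic := by
  rintro v (_ | ⟨hvw, p⟩) hc
  · exact hc.not_nil SimpleGraph.Walk.Nil.nil
  have hlen := hc.three_le_length
  rw [SimpleGraph.Walk.cons_isCycle_iff] at hc
  have hsupp := p.reverse.cons_tail_support
  refine hacyc ⟨v, p.reverse.support.tail, by simpa using hlen, ?_, ?_, ?_⟩
  · exact hsupp.symm ▸ hc.1.reverse.support_nodup
  · exact hsupp.symm ▸ p.reverse.isChain_adj_support
  · simp only [hsupp, SimpleGraph.Walk.getLast_support]
    exact hvw.symm

theorem IsGraph.pointsTo_iff_exists_isPath (hG : IsGraph G) {e : X × X} {y : X} :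
    PointsTo G e y ↔ ∃ p : hG.toSimpleGraph.Walk e.1 y, p.IsPath ∧ e.2 ∈ p.support := by
  constructor
  · rintro ⟨l, ⟨hne, hnd, hch⟩, hh, hl, hm⟩
    replace hch : l.IsChain hG.toSimpleGraph.Adj := hch
    have hh' : l.head hne = e.1 :=
      Option.some.inj ((List.head?_eq_some_head hne).symm.trans hh)
    have hl' : l.getLast hne = y :=
      Option.some.inj ((List.getLast?_eq_some_getLast hne).symm.trans hl)
    refine ⟨(SimpleGraph.Walk.ofSupport (G := hG.toSimpleGraph) l hne hch).copy hh' hl', ?_, ?_⟩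
    · rw [SimpleGraph.Walk.isPath_def, SimpleGraph.Walk.support_copy,
        SimpleGraph.Walk.support_ofSupport]
      exact hnd
    · rw [SimpleGraph.Walk.support_copy, SimpleGraph.Walk.support_ofSupport]
      exact hm
  · rintro ⟨p, hp, hm⟩
    refine ⟨p.support, ⟨p.support_ne_nil, hp.support_nodup, p.isChain_adj_support⟩,
      ?_, ?_, hm⟩
    · rw [← p.cons_tail_support]; rfl
    · rw [List.getLast?_eq_some_getLast p.support_ne_nil, p.getLast_support]

theorem IsGraph.reachable_of_pointsTo (hG : IsGraph G) {e : X × X} {y : X}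
    (h : PointsTo G e y) : hG.toSimpleGraph.Reachable e.1 y :=
  let ⟨p, _⟩ := hG.pointsTo_iff_exists_isPath.mp h; ⟨p⟩

theorem IsGraph.pointsTo_snd (hG : IsGraph G) {a b : X} (hab : (a, b) ∈ G) :
    PointsTo G (a, b) b :=
  hG.pointsTo_iff_exists_isPath.mpr
    ⟨_, (SimpleGraph.Path.singleton (G := hG.toSimpleGraph) hab).property, by simp⟩

theorem IsGraph.interferes_symm (hG : IsGraph G) {e e' : X × X} (h : Interferes G e e') :
    Interferes G e' e :=
  ⟨h.1.symm, hG.conn_iff_reachable.mpr (hG.conn_iff_reachable.mp h.2.1).symm, h.2.2.2, h.2.2.1⟩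

theorem pointsTo_iff_mem_support (hG : IsGraph G) (hacyc : Acyclic G) {a b y : X}
    {p : hG.toSimpleGraph.Walk a y} (hp : p.IsPath) : PointsTo G (a, b) y ↔ b ∈ p.support := by
  rw [hG.pointsTo_iff_exists_isPath]
  refine ⟨fun ⟨q, hq, hb⟩ => ?_, fun hb => ⟨p, hp, hb⟩⟩
  obtain rfl : q = p := congrArg Subtype.val
    (((hacyc.isAcyclic hG).subsingleton_path _ _).elim ⟨q, hq⟩ ⟨p, hp⟩)
  exact hb

theorem pointsTo_swap_iff (hG : IsGraph G) (hacyc : Acyclic G) {a b y : X} (hab : (a, b) ∈ G)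
    (hay : hG.toSimpleGraph.Reachable a y) :
    PointsTo G (b, a) y ↔ ¬ PointsTo G (a, b) y := by
  obtain ⟨p, hp⟩ := hay.exists_isPath
  obtain ⟨q, hq⟩ :=
    ((SimpleGraph.Adj.reachable (G := hG.toSimpleGraph) hab).symm.trans hay).exists_isPath
  rw [pointsTo_iff_mem_support hG hacyc hq, pointsTo_iff_mem_support hG hacyc hp,
    (hacyc.isAcyclic hG).mem_support_iff_notMem_support hab hp hq, not_not]

theorem not_pointsTo_fst (hG : IsGraph G) (hacyc : Acyclic G) {a b : X} (hab : (a, b) ∈ G) :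
    ¬ PointsTo G (a, b) a :=
  (pointsTo_swap_iff hG hacyc hab (SimpleGraph.Reachable.refl a)).mp
    (hG.pointsTo_snd (hG.1 a b hab))

theorem not_pointsTo_of_adj_s16 (hG : IsGraph G) (hacyc : Acyclic G) {a b c d : X}
    (hab : (a, b) ∈ G) (hcd : (c, d) ∈ G) (hne : (c, d) ≠ (a, b))
    (hac : hG.toSimpleGraph.Reachable a c)
    (hc : ¬ PointsTo G (a, b) c) : ¬ PointsTo G (a, b) d := by
  obtain ⟨p, hp⟩ := hac.exists_isPath
  obtain ⟨q, hq⟩ :=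
    (hac.trans (SimpleGraph.Adj.reachable (G := hG.toSimpleGraph) hcd)).exists_isPath
  rw [pointsTo_iff_mem_support hG hacyc hp] at hc
  rw [pointsTo_iff_mem_support hG hacyc hq]
  intro hbq
  obtain ⟨rfl, rfl⟩ := (hacyc.isAcyclic hG).eq_of_adj_of_notMem_of_mem hab hcd hp hq hc hbq
  exact hne rfl

theorem EdgePrec.neg (hG : IsGraph G) (hacyc : Acyclic G) {f e : X × X} (hf : f ∈ G)
    (he : e ∈ G) (h : EdgePrec G f e) : EdgePrec G (neg e) (neg f) := by
  obtain ⟨u, v⟩ := f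
  obtain ⟨a, b⟩ := e
  obtain ⟨hva, hbu⟩ : PointsTo G (u, v) a ∧ ¬ PointsTo G (a, b) u := h
  have hua := hG.reachable_of_pointsTo hva
  have huv := SimpleGraph.Adj.reachable (G := hG.toSimpleGraph) hf
  have hfe : (u, v) ≠ (a, b) := fun heq => not_pointsTo_fst hG hacyc he (heq ▸ hva)
  have hef : (a, b) ≠ (v, u) := fun heq => hbu (heq ▸ hG.pointsTo_snd (hG.1 u v hf))
  refine ⟨(pointsTo_swap_iff hG hacyc he (hua.symm.trans huv)).mpr ?_, ?_⟩
  · exact not_pointsTo_of_adj_s16 hG hacyc he hf hfe hua.symm hbu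
  · have hva' := huv.symm.trans hua
    exact not_pointsTo_of_adj_s16 hG hacyc (hG.1 u v hf) he hef hva'
      ((pointsTo_swap_iff hG hacyc (hG.1 u v hf) hva').mp hva)

theorem Interferes.edgePrec_neg (hG : IsGraph G) (hacyc : Acyclic G) {e e' : X × X}
    (he : e ∈ G) (he' : e' ∈ G) (h : Interferes G e e') : EdgePrec G (neg e') e := by
  obtain ⟨a, b⟩ := e
  obtain ⟨c, d⟩ := e'
  obtain ⟨hne, hconn, hbc, hda⟩ := h
  have hac := hG.conn_iff_reachable.mp hconn
  exact ⟨(pointsTo_swap_iff hG hacyc he' hac.symm).mpr hda,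
    not_pointsTo_of_adj_s16 hG hacyc he he' hne.symm hac hbc⟩

end Paper

open Paper

/-- If `S` and `T` are consistent and `≺`-downward-closed sets of directed edges of
an acyclic graph `G`, then so is `T ∪ (S ∖ (-T))`. -/
theorem union_sdiff_consistent {X : Type*}
    (G : Set (X × X)) (hG : IsGraph G) (hacyc : Acyclic G)
    (S T : Set (X × X)) (hS : S ⊆ G) (hT : T ⊆ G)
    (hScons : Consistent G S) (hSclosed : PrecClosed G S)
    (hTcons : Consistent G T) (hTclosed : PrecClosed G T) :
    Consistent G (T ∪ (S \ {e | neg e ∈ T})) ∧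
    PrecClosed G (T ∪ (S \ {e | neg e ∈ T})) := by
  have hmixed : ∀ e ∈ T, ∀ e' ∈ S, neg e' ∉ T → ¬ Interferes G e e' :=
    fun e he e' he' hne hI => hne (hTclosed _ e (hI.edgePrec_neg hG hacyc (hT he) (hS he')) he)
  refine ⟨?_, ?_⟩
  · rintro e (he | ⟨he, hne⟩) e' (he' | ⟨he', hne'⟩) hI
    · exact hTcons e he e' he' hI
    · exact hmixed e he e' he' hne' hI
    · exact hmixed e' he' e he hne (hG.interferes_symm hI)
    · exact hScons e he e' he' hI
  · rintro f e hfe (he | ⟨he, hne⟩)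
    · exact Or.inl (hTclosed f e hfe he)
    · have hf := hSclosed f e hfe he
      exact Or.inr ⟨hf, fun hnf => hne (hTclosed _ _ (hfe.neg hG hacyc (hS hf) (hS he)) hnf)⟩
end
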